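/- arXiv:2510.08448 — 6 statements merged into one kernel-verified Lean document; each statement's English description precedes it below -/
import Mathlib

section
/- Let f(x) be a monic polynomial with integer coefficients all of whose complex roots have absolute value at most 1. Then f(x) is a product of cyclotomic polynomials and a power of x. -/
open Polynomial


lemma multiset_prod_le_one {t : Multiset ℝ} (h0 : ∀ x ∈ t, 0 ≤ x) (h1 : ∀ x ∈ t, x ≤ 1) :
    t.prod ≤ 1 := by
  induction t using Multiset.induction with
  | empty => simp
  | cons a t ih =>
    rw [Multiset.prod_cons]
    have := ih (fun y hy => h0 y (Multiset.mem_cons_of_mem hy))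
      (fun y hy => h1 y (Multiset.mem_cons_of_mem hy))
    have ha0 := h0 a (Multiset.mem_cons_self a t)
    have ha1 := h1 a (Multiset.mem_cons_self a t)
    nlinarith [Multiset.prod_nonneg (fun y hy => h0 y (Multiset.mem_cons_of_mem hy))]

lemma multiset_all_eq_one {s : Multiset ℝ} (h0 : ∀ x ∈ s, 0 ≤ x) (h1 : ∀ x ∈ s, x ≤ 1)
    (hp : 1 ≤ s.prod) : ∀ x ∈ s, x = 1 := by
  intro x hx
  obtain ⟨t, rfl⟩ := Multiset.exists_cons_of_mem hx
  rw [Multiset.prod_cons] at hp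
  have ht1 : t.prod ≤ 1 := multiset_prod_le_one (fun y hy => h0 y (Multiset.mem_cons_of_mem hy))
    (fun y hy => h1 y (Multiset.mem_cons_of_mem hy))
  have hx0 := h0 x hx
  have hx1 := h1 x hx
  nlinarith [Multiset.prod_nonneg (fun y hy => h0 y (Multiset.mem_cons_of_mem hy))]

lemma root_is_primroot (f : Polynomial ℤ) (hf : f.Monic)
    (hroots : ∀ z : ℂ, aeval z f = 0 → ‖z‖ ≤ 1)
    (z : ℂ) (hz : aeval z f = 0) (hz0 : z ≠ 0) :
    ∃ n : ℕ, 0 < n ∧ IsPrimitiveRoot z n := by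
  have hzi : IsIntegral ℤ z := ⟨f, hf, by rwa [aeval_def] at hz⟩
  have hzQ : IsIntegral ℚ z := hzi.tower_top
  let K := IntermediateField.adjoin ℚ ({z} : Set ℂ)
  haveI : FiniteDimensional ℚ K := IntermediateField.adjoin.finiteDimensional hzQ
  haveI : NumberField K := ⟨⟩
  let x : K := IntermediateField.AdjoinSimple.gen ℚ z
  have hxz : algebraMap K ℂ x = z := rfl
  have hxf : aeval x f = 0 := by
    apply (algebraMap K ℂ).injective
    rw [map_zero, ← hz, ← hxz, aeval_algebraMap_apply]
  have hxi : IsIntegral ℤ x := ⟨f, hf, by rwa [aeval_def] at hxf⟩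
  have hx0 : x ≠ 0 := by
    intro h; apply hz0; rw [← hxz, h, map_zero]
  have hxQi : IsIntegral ℚ x := hxi.tower_top
  set P : ℚ[X] := minpoly ℚ x with hP
  have hPmonic : P.Monic := minpoly.monic hxQi
  have hPdvd : P ∣ f.map (algebraMap ℤ ℚ) :=
    minpoly.dvd ℚ x (by rwa [aeval_map_algebraMap])
  set R : Multiset ℂ := (P.map (algebraMap ℚ ℂ)).roots with hR
  have hRf : ∀ w ∈ R, aeval w f = 0 := by
    intro w hw
    have h1 : P.map (algebraMap ℚ ℂ) ∣ f.map (algebraMap ℤ ℂ) := by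
      have h2 := Polynomial.map_dvd (algebraMap ℚ ℂ) hPdvd
      rwa [Polynomial.map_map, ← IsScalarTower.algebraMap_eq] at h2
    have hw' : (P.map (algebraMap ℚ ℂ)).IsRoot w := (mem_roots'.mp hw).2
    have h3 : (f.map (algebraMap ℤ ℂ)).IsRoot w := hw'.dvd h1
    rwa [IsRoot.def, eval_map, ← aeval_def] at h3
  have hRle : ∀ w ∈ R, ‖w‖ ≤ 1 := fun w hw => hroots w (hRf w hw)
  have hfr : P = (minpoly ℤ x).map (algebraMap ℤ ℚ) :=
    minpoly.isIntegrallyClosed_eq_field_fractions' ℚ hxi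
  have hc0 : (minpoly ℤ x).coeff 0 ≠ 0 := by
    intro hc
    obtain ⟨q, hq⟩ := (X_dvd_iff).mpr hc
    have hmm : (minpoly ℤ x).Monic := minpoly.monic hxi
    have hqm : q.Monic := by
      rw [hq] at hmm
      exact monic_X.of_mul_monic_left hmm
    have hq0 : aeval x q = 0 := by
      have h4 := minpoly.aeval ℤ x
      rw [hq, map_mul, aeval_X, mul_eq_zero] at h4
      exact h4.resolve_left hx0
    have hmin := minpoly.min ℤ x hqm hq0
    rw [hq, degree_mul, degree_X, degree_eq_natDegree hqm.ne_zero] at hmin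
    have h5 : (1 : WithBot ℕ) + q.natDegree ≤ q.natDegree := hmin
    have h6 : 1 + q.natDegree ≤ q.natDegree := by exact_mod_cast h5
    omega
  have hcoeff : (1 : ℝ) ≤ ‖(P.map (algebraMap ℚ ℂ)).coeff 0‖ := by
    rw [coeff_map, hfr, coeff_map]
    have h6 : (algebraMap ℚ ℂ) ((algebraMap ℤ ℚ) ((minpoly ℤ x).coeff 0))
        = ((minpoly ℤ x).coeff 0 : ℂ) := by rw [eq_intCast, map_intCast]
    rw [h6, Complex.norm_intCast]
    exact_mod_cast Int.one_le_abs hc0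
  have hsplits : (P.map (algebraMap ℚ ℂ)).Splits := IsAlgClosed.splits _
  have hprod := hsplits.coeff_zero_eq_prod_roots_of_monic (hPmonic.map (algebraMap ℚ ℂ))
  have habs : (1 : ℝ) ≤ (R.map (fun w : ℂ => ‖w‖)).prod := by
    have h7 : (R.map (fun w : ℂ => ‖w‖)).prod = ‖R.prod‖ := by
      simpa using (Multiset.prod_hom R (normHom : ℂ →*₀ ℝ).toMonoidHom)
    rw [h7]
    have h11 := hcoeff
    rw [hprod] at h11
    simpa [map_mul, map_pow, norm_neg] using h11
  have hall : ∀ w ∈ R, ‖w‖ = 1 := by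
    intro w hw
    have h8 := multiset_all_eq_one (s := R.map (fun w : ℂ => ‖w‖))
      (by intro a ha; obtain ⟨b, hb, rfl⟩ := Multiset.mem_map.mp ha; exact norm_nonneg _)
      (by intro a ha; obtain ⟨b, hb, rfl⟩ := Multiset.mem_map.mp ha; exact hRle b hb)
      habs
    exact h8 _ (Multiset.mem_map_of_mem _ hw)
  have hnorm : ∀ φ : (K →+* ℂ), ‖φ x‖ = 1 := by
    intro φ
    have hmem : φ x ∈ P.rootSet ℂ := by
      have h9 := NumberField.Embeddings.range_eval_eq_rootSet_minpoly K ℂ x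
      rw [← hP] at h9
      rw [← h9]
      exact ⟨φ, rfl⟩
    rw [mem_rootSet] at hmem
    have h10 : φ x ∈ R := by
      have hne : P.map (algebraMap ℚ ℂ) ≠ 0 :=
        (Polynomial.map_ne_zero_iff (algebraMap ℚ ℂ).injective).mpr hmem.1
      rw [hR, mem_roots hne, IsRoot.def, eval_map, ← aeval_def]
      exact hmem.2
    exact hall _ h10
  obtain ⟨n, hn, hxn⟩ := NumberField.Embeddings.pow_eq_one_of_norm_eq_one K ℂ hxi hnorm
  have hzn : z ^ n = 1 := by
    rw [← hxz, ← map_pow, hxn, map_one]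
  have hfin : IsOfFinOrder z := isOfFinOrder_iff_pow_eq_one.mpr ⟨n, hn, hzn⟩
  exact ⟨orderOf z, hfin.orderOf_pos, IsPrimitiveRoot.orderOf z⟩

lemma cyc_prod_cons (n : ℕ+) (s : Multiset ℕ+) :
    (Multiset.map (fun m : ℕ => cyclotomic m ℤ)
        ((n ::ₘ s : Multiset ℕ+) >>= fun a => (pure (a : ℕ) : Multiset ℕ))).prod
      = cyclotomic (n : ℕ) ℤ *
        (Multiset.map (fun m : ℕ => cyclotomic m ℤ)
          (s >>= fun a => (pure (a : ℕ) : Multiset ℕ))).prod := by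
  show (Multiset.map (fun m : ℕ => cyclotomic m ℤ) ((n ::ₘ s).bind fun a => {(a : ℕ)})).prod
      = cyclotomic (n : ℕ) ℤ *
        (Multiset.map (fun m : ℕ => cyclotomic m ℤ) (s.bind fun a => {(a : ℕ)})).prod
  simp [Multiset.cons_bind]

lemma kronecker_aux (N : ℕ) : ∀ f : Polynomial ℤ, f.natDegree ≤ N → f.Monic →
    (∀ z : ℂ, aeval z f = 0 → ‖z‖ ≤ 1) →
    ∃ (r : ℕ) (s : Multiset ℕ+),
      f = X ^ r * (s.map (fun n => cyclotomic (n : ℕ) ℤ)).prod := by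
  induction N with
  | zero =>
    intro f hdeg hf _
    have : f = 1 := hf.natDegree_eq_zero.mp (Nat.le_zero.mp hdeg)
    exact ⟨0, 0, by simp [this]⟩
  | succ N ih =>
    intro f hdeg hf hroots
    by_cases hd : f.natDegree = 0
    · have : f = 1 := hf.natDegree_eq_zero.mp hd
      exact ⟨0, 0, by simp [this]⟩
    · have hdpos : 0 < (f.map (algebraMap ℤ ℂ)).degree := by
        rw [hf.degree_map]
        exact natDegree_pos_iff_degree_pos.mp (Nat.pos_of_ne_zero hd)
      obtain ⟨z, hzr⟩ := Complex.exists_root hdpos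
      have hz : aeval z f = 0 := by rw [aeval_def, ← eval_map]; exact hzr
      by_cases hz0 : z = 0
      · -- X divides f
        have hc : f.coeff 0 = 0 := by
          have h1 : aeval (0 : ℂ) f = 0 := hz0 ▸ hz
          rw [aeval_def, eval₂_at_zero, algebraMap_int_eq, eq_intCast] at h1
          exact_mod_cast h1
        obtain ⟨g, hg⟩ := X_dvd_iff.mpr hc
        have hfg : f = X * g := hg
        have hgm : g.Monic := by
          rw [hfg] at hf
          exact monic_X.of_mul_monic_left hf
        have hgd : g.natDegree ≤ N := by
          have : f.natDegree = 1 + g.natDegree := by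
            rw [hfg, natDegree_mul X_ne_zero hgm.ne_zero, natDegree_X]
          omega
        have hgroots : ∀ w : ℂ, aeval w g = 0 → ‖w‖ ≤ 1 := by
          intro w hw
          exact hroots w (by rw [hfg, map_mul, hw, mul_zero])
        obtain ⟨r, s, hrs⟩ := ih g hgd hgm hgroots
        exact ⟨r + 1, s, by rw [hfg, hrs]; ring⟩
      · obtain ⟨n, hn, hprim⟩ := root_is_primroot f hf hroots z hz hz0
        have hzi : IsIntegral ℤ z := ⟨f, hf, by rwa [aeval_def] at hz⟩
        have hcyc : cyclotomic n ℤ = minpoly ℤ z := cyclotomic_eq_minpoly hprim hn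
        have hdvd : cyclotomic n ℤ ∣ f := by
          rw [hcyc]
          exact minpoly.isIntegrallyClosed_dvd hzi hz
        obtain ⟨g, hg⟩ := hdvd
        have hgm : g.Monic := by
          rw [hg] at hf
          exact (cyclotomic.monic n ℤ).of_mul_monic_left hf
        have hgd : g.natDegree ≤ N := by
          have h2 : f.natDegree = n.totient + g.natDegree := by
            rw [hg, natDegree_mul (cyclotomic_ne_zero n ℤ) hgm.ne_zero, natDegree_cyclotomic]
          have := Nat.totient_pos.mpr hn
          omega
        have hgroots : ∀ w : ℂ, aeval w g = 0 → ‖w‖ ≤ 1 := by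
          intro w hw
          exact hroots w (by rw [hg, map_mul, hw, mul_zero])
        obtain ⟨r, s, hrs⟩ := ih g hgd hgm hgroots
        refine ⟨r, ⟨n, hn⟩ ::ₘ s, ?_⟩
        rw [hg, hrs]
        rw [cyc_prod_cons ⟨n, hn⟩ s, PNat.mk_coe]
        ring

/-- **Kronecker's lemma**: a monic integer polynomial all of whose complex roots
have absolute value at most 1 is a product of cyclotomic polynomials and a power of `X`. -/
theorem kronecker_lemma (f : Polynomial ℤ) (hf : f.Monic)
    (hroots : ∀ z : ℂ, aeval z f = 0 → ‖z‖ ≤ 1) :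
    ∃ (r : ℕ) (s : Multiset ℕ+),
      f = X ^ r * (s.map (fun n => cyclotomic (n : ℕ) ℤ)).prod := by
  exact kronecker_aux f.natDegree f le_rfl hf hroots
end

section
/- For every natural number n ≥ 1 and N ≥ 1, and every rational number p/q in lowest terms with 0 < p/q < 1/2, the number k = 2π p/q is not a solution of the equation -(1/(2^{n+1}-1)) tan(k/2) = tan(Nk) with k ∈ (0,π). In other words, the solution set of this equation is disjoint from π·ℚ. -/
open Real Polynomial


lemma natCast_odd_zmod2 {L : ℕ} (hL : Odd L) : ((L : ZMod 2)) = 1 := by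
  obtain ⟨j, rfl⟩ := hL; push_cast; simp [show ((2:ZMod 2)) = 0 from rfl]

lemma sqfree_F2 {L : ℕ} (hL : Odd L) :
    Squarefree ((X : (ZMod 2)[X]) ^ L - 1) := by
  have hL1 : 1 ≤ L := hL.pos
  have hder : derivative ((X : (ZMod 2)[X]) ^ L - 1) = X ^ (L - 1) := by
    rw [derivative_sub, derivative_one, derivative_X_pow, sub_zero,
      natCast_odd_zmod2 hL, C_1, one_mul]
  have hsep : Separable ((X : (ZMod 2)[X]) ^ L - 1) := by
    rw [Polynomial.separable_def, hder]
    refine ⟨-1, X, ?_⟩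
    have : (X : (ZMod 2)[X]) * X ^ (L - 1) = X ^ L := by
      rw [← pow_succ']; congr 1; omega
    rw [this]; ring

  exact hsep.squarefree

lemma cyclotomic_not_unit {t : ℕ} (ht : 1 ≤ t) : ¬ IsUnit (cyclotomic t (ZMod 2)) := by
  intro h
  have hdeg : (cyclotomic t (ZMod 2)).degree = t.totient := degree_cyclotomic t (ZMod 2)
  have := Polynomial.degree_eq_zero_of_isUnit h
  rw [hdeg] at this
  have htot : 0 < t.totient := Nat.totient_pos.mpr ht
  simp at this
  omega

-- pair of distinct cyclotomics divides X^L - 1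
lemma two_cyclotomic_dvd {t d L : ℕ} (hL : 0 < L) (htL : t ∣ L) (hdL : d ∣ L)
    (htd : t ≠ d) (ht : 0 < t) (hd : 0 < d) :
    cyclotomic t (ZMod 2) * cyclotomic d (ZMod 2) ∣ (X : (ZMod 2)[X]) ^ L - 1 := by
  rw [← prod_cyclotomic_eq_X_pow_sub_one hL]
  have hsub : ({t, d} : Finset ℕ) ⊆ L.divisors := by
    intro x hx
    simp at hx
    rcases hx with rfl | rfl <;> exact Nat.mem_divisors.mpr ⟨by assumption, hL.ne'⟩
  calc cyclotomic t (ZMod 2) * cyclotomic d (ZMod 2)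
      = ∏ i ∈ ({t, d} : Finset ℕ), cyclotomic i (ZMod 2) := (Finset.prod_pair (f := fun i => cyclotomic i (ZMod 2)) htd).symm
    _ ∣ ∏ i ∈ L.divisors, cyclotomic i (ZMod 2) :=
        Finset.prod_dvd_prod_of_subset _ _ _ hsub

lemma L3 {t K : ℕ} (ht : Odd t) (ht1 : 1 ≤ t) (hK : Odd K)
    (hdvd : cyclotomic t (ZMod 2) ∣ (X : (ZMod 2)[X]) ^ K - 1) : t ∣ K := by
  by_contra hndvd
  obtain ⟨pp, hpirr, hpdvd⟩ := WfDvdMonoid.exists_irreducible_factor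
    (cyclotomic_not_unit ht1) (cyclotomic_ne_zero t (ZMod 2))
  have hp : Prime pp := hpirr.prime
  have hKpos : 0 < K := hK.pos
  have hpK : pp ∣ ∏ i ∈ K.divisors, cyclotomic i (ZMod 2) := by
    rw [prod_cyclotomic_eq_X_pow_sub_one hKpos]
    exact hpdvd.trans hdvd
  obtain ⟨d, hdmem, hpd⟩ := hp.exists_mem_finset_dvd hpK
  obtain ⟨hdK, -⟩ := Nat.mem_divisors.mp hdmem
  have hdt : t ≠ d := by rintro rfl; exact hndvd hdK
  have hLodd : Odd (t * K) := ht.mul hK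
  have hdvd2 : pp * pp ∣ (X : (ZMod 2)[X]) ^ (t * K) - 1 :=
    (mul_dvd_mul hpdvd hpd).trans
      (two_cyclotomic_dvd (by positivity) (dvd_mul_right t K) (hdK.trans ⟨t, Nat.mul_comm t K⟩)
        hdt ht1 (Nat.pos_of_mem_divisors hdmem))
  exact hp.not_unit (sqfree_F2 hLodd pp hdvd2)

lemma main_nt (n N m : ℕ) (hn : 1 ≤ n) (hN : 1 ≤ N) (ζ : ℂ) (hm : 0 < m)
    (hζ : IsPrimitiveRoot ζ m) (h1 : ζ ≠ 1) (h2 : ζ ≠ -1)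
    (heq : (2:ℂ)^n * ζ^(2*N+1) + ((2:ℂ)^n - 1) * ζ^(2*N) - ((2:ℂ)^n - 1) * ζ - 2^n = 0) :
    False := by
  have hsq : ζ^2 ≠ 1 := by
    intro h
    rcases (mul_self_eq_one_iff (a := ζ)).mp (by rw [← pow_two]; exact h) with h' | h'
    · exact h1 h'
    · exact h2 h'
  have hm2 : 2 < m := by
    rcases Nat.lt_or_ge m 3 with h | h
    · interval_cases m
      · exact absurd (hζ.pow_eq_one) (by simpa using h1)
      · exact (hsq (by simpa using hζ.pow_eq_one)).elim
    · omega
  have hint : IsIntegral ℤ ζ := hζ.isIntegral hm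
  set P : ℤ[X] := (2:ℤ[X])^n * X^(2*N+1) + ((2:ℤ[X])^n - 1) * X^(2*N)
      - ((2:ℤ[X])^n - 1) * X - (2:ℤ[X])^n with hP
  have haev : aeval ζ P = 0 := by
    simp only [hP, map_add, map_sub, map_mul, map_pow, aeval_X, map_one, map_ofNat]
    linear_combination heq
  have hdvd1 : cyclotomic m ℤ ∣ P := by
    rw [cyclotomic_eq_minpoly hζ hm]
    exact minpoly.isIntegrallyClosed_dvd hint haev
  have hdvd2 : cyclotomic m (ZMod 2) ∣ (X : (ZMod 2)[X]) - X^(2*N) := by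
    have hmap := Polynomial.map_dvd (Int.castRingHom (ZMod 2)) hdvd1
    rw [map_cyclotomic] at hmap
    convert hmap using 1
    simp only [hP, Polynomial.map_add, Polynomial.map_sub, Polynomial.map_mul,
      Polynomial.map_pow, Polynomial.map_one, Polynomial.map_ofNat, map_X]
    rw [show ((2:(ZMod 2)[X])) = 0 from CharTwo.two_eq_zero]
    rw [zero_pow (by omega)]
    ring
  have hdvd3 : cyclotomic m (ZMod 2) ∣ (X : (ZMod 2)[X])^(2*N) - X := by
    rwa [show (X : (ZMod 2)[X]) - X^(2*N) = -(X^(2*N) - X) by ring, dvd_neg] at hdvd2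
  have hXdvd : ¬ (X : (ZMod 2)[X]) ∣ cyclotomic m (ZMod 2) := by
    rw [Polynomial.X_dvd_iff, cyclotomic_coeff_zero _ (by omega)]
    exact one_ne_zero
  have hcop : IsCoprime (X : (ZMod 2)[X]) (cyclotomic m (ZMod 2)) :=
    (Polynomial.prime_X.coprime_iff_not_dvd).mpr hXdvd
  have hKodd : Odd (2*N - 1) := ⟨N - 1, by omega⟩
  have hdvd4 : cyclotomic m (ZMod 2) ∣ (X : (ZMod 2)[X])^(2*N-1) - 1 := by
    apply hcop.symm.dvd_of_dvd_mul_left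
    have hfac : (X : (ZMod 2)[X]) * (X^(2*N-1) - 1) = X^(2*N) - X := by
      rw [mul_sub, mul_one, ← pow_succ']
      congr 2
      omega
    rwa [hfac]
  by_cases h4 : (4:ℕ) ∣ m
  · -- 4 ∣ m : square divides squarefree
    have h2half : 2 ∣ m / 2 := by omega
    have hexp : expand (ZMod 2) 2 (cyclotomic (m/2) (ZMod 2)) = cyclotomic m (ZMod 2) := by
      have := cyclotomic_expand_eq_cyclotomic Nat.prime_two h2half (ZMod 2)
      rwa [show m / 2 * 2 = m by omega] at this
    have hfrob : Polynomial.map (frobenius (ZMod 2) 2)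
        (expand (ZMod 2) 2 (cyclotomic (m/2) (ZMod 2))) = cyclotomic (m/2) (ZMod 2) ^ 2 :=
      Polynomial.map_frobenius_expand (p := 2) _
    rw [hexp, ZMod.frobenius_zmod, Polynomial.map_id] at hfrob
    have : cyclotomic (m/2) (ZMod 2) * cyclotomic (m/2) (ZMod 2) ∣
        (X : (ZMod 2)[X])^(2*N-1) - 1 := by
      rw [← pow_two, ← hfrob]; exact hdvd4
    exact cyclotomic_not_unit (t := m/2) (by omega) (sqfree_F2 hKodd _ this)
  · -- m odd or m ≡ 2 [4]
    have hmain : ∀ t : ℕ, Odd t → (cyclotomic t (ZMod 2) ∣ (X : (ZMod 2)[X])^(2*N-1) - 1) →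
        t ∣ 2*N - 1 := fun t ht hd => L3 ht ht.pos hKodd hd
    by_cases h2m : (2:ℕ) ∣ m
    · -- m = 2t, t odd ≥ 3
      obtain ⟨t, rfl⟩ : ∃ t, m = 2 * t := h2m
      have htodd : Odd t := by
        rcases Nat.even_or_odd t with he | ho
        · obtain ⟨c, hc⟩ := he
          have h4' : (4:ℕ) ∣ 2*t := ⟨c, by omega⟩
          exact (h4 h4').elim
        · exact ho
      have hcyceq : cyclotomic (2*t) (ZMod 2) = cyclotomic t (ZMod 2) := by
        have hmul := cyclotomic_expand_eq_cyclotomic_mul (p := 2) (n := t) Nat.prime_two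
          (by intro hdd; rw [Nat.odd_iff] at htodd; omega) (ZMod 2)
        have hfrob : Polynomial.map (frobenius (ZMod 2) 2)
            (expand (ZMod 2) 2 (cyclotomic t (ZMod 2))) = cyclotomic t (ZMod 2) ^ 2 :=
          Polynomial.map_frobenius_expand (p := 2) _
        rw [ZMod.frobenius_zmod, Polynomial.map_id, hmul] at hfrob
        have hne : cyclotomic t (ZMod 2) ≠ 0 := cyclotomic_ne_zero t (ZMod 2)
        have : cyclotomic (t*2) (ZMod 2) * cyclotomic t (ZMod 2)
            = cyclotomic t (ZMod 2) * cyclotomic t (ZMod 2) := by rw [hfrob]; ring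
        have := mul_right_cancel₀ hne this
        rwa [show t*2 = 2*t by ring] at this
      have htdvd : t ∣ 2*N - 1 := hmain t htodd (by rwa [hcyceq] at hdvd4)
      -- ζ^(2N-1) = -1
      have hηsq : (ζ^(2*N-1))^2 = 1 := by
        obtain ⟨c, hc⟩ := htdvd
        rw [← pow_mul, hc, show t*c*2 = (2*t)*c by ring, pow_mul, hζ.pow_eq_one, one_pow]
      have hηne : ζ^(2*N-1) ≠ 1 := by
        intro h
        have hdv := hζ.dvd_of_pow_eq_one _ h
        have h2' : (2:ℕ) ∣ 2*N - 1 := dvd_trans (dvd_mul_right 2 t) hdv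
        omega
      have hη : ζ^(2*N-1) = -1 := by
        rcases (mul_self_eq_one_iff (a := ζ^(2*N-1))).mp (by rw [← pow_two]; exact hηsq)
          with h' | h'
        · exact absurd h' hηne
        · exact h'
      have e1 : ζ^(2*N+1) = -ζ^2 := by
        rw [show 2*N+1 = (2*N-1) + 2 by omega, pow_add, hη]; ring
      have e2 : ζ^(2*N) = -ζ := by
        rw [show 2*N = (2*N-1) + 1 by omega, pow_add, hη]; ring
      rw [e1, e2] at heq
      have hq : (2:ℂ)^n * ζ^2 + 2*((2:ℂ)^n - 1)*ζ + 2^n = 0 := by linear_combination -heq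
      rcases eq_or_lt_of_le hn with hn1 | hn2
      · -- n = 1
        rw [← hn1] at hq
        have hζ3 : ζ^3 = 1 := by linear_combination ((ζ-1)/2) * hq
        have hdv := hζ.dvd_of_pow_eq_one _ hζ3
        have h2' : (2:ℕ) ∣ 3 := dvd_trans (dvd_mul_right 2 t) hdv
        omega
      · -- n ≥ 2
        have hζ0 : ζ ≠ 0 := hζ.ne_zero (by omega)
        have hinv : ζ * ζ^(2*t-1) = 1 := by
          rw [← pow_succ', show 2*t-1+1 = 2*t by omega, hζ.pow_eq_one]
        have hα : IsIntegral ℤ (ζ + ζ^(2*t-1)) := hint.add (hint.pow _)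
        have hval : (2:ℂ)^n * (ζ + ζ^(2*t-1)) + 2*((2:ℂ)^n - 1) = 0 := by
          linear_combination ζ^(2*t-1) * hq - ((2:ℂ)^n*ζ + 2*((2:ℂ)^n - 1)) * hinv
        set r : ℚ := -(2*((2:ℚ)^n - 1))/2^n with hr
        have hrval : (algebraMap ℚ ℂ r) = ζ + ζ^(2*t-1) := by
          rw [hr]
          push_cast
          have h2n : ((2:ℂ)^n) ≠ 0 := pow_ne_zero _ two_ne_zero
          field_simp
          simp only [map_ofNat, map_pow, Rat.cast_ofNat, Rat.cast_pow]
          linear_combination -hval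
        have hrint : IsIntegral ℤ r := by
          rw [← isIntegral_algebraMap_iff (algebraMap ℚ ℂ).injective, hrval]
          exact hα
        obtain ⟨z, hz⟩ := IsIntegrallyClosed.isIntegral_iff.mp hrint
        have h2nq : (0:ℚ) < 2^n := by positivity
        have hb1 : (2:ℚ)^n < 2*((2:ℚ)^n - 1) := by
          have : (2:ℚ) < 2^n := by
            calc (2:ℚ) < 4 := by norm_num
            _ = 2^2 := by norm_num
            _ ≤ 2^n := by
              apply pow_le_pow_right₀ (by norm_num) (by omega)
          linarith
        have hb2 : 2*((2:ℚ)^n - 1) < 2 * 2^n := by linarith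
        have hzb : -2 < r ∧ r < -1 := by
          constructor
          · rw [hr, neg_div, neg_lt_neg_iff]
            rw [div_lt_iff₀ h2nq]
            linarith
          · rw [hr, neg_div, neg_lt_neg_iff]
            rw [lt_div_iff₀ h2nq]
            linarith
        have hzz : ((z:ℚ)) = r := by exact_mod_cast hz
        rw [← hzz] at hzb
        have : (-2:ℚ) < z ∧ (z:ℚ) < -1 := hzb
        have h1' : (-2:ℤ) < z := by exact_mod_cast this.1
        have h2' : (z:ℤ) < -1 := by exact_mod_cast this.2
        omega
    · -- m odd
      have hmodd : Odd m := Nat.odd_iff.mpr (by omega)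
      have hmd : m ∣ 2*N - 1 := hmain m hmodd hdvd4
      have hK1 : ζ^(2*N-1) = 1 := by
        obtain ⟨c, hc⟩ := hmd
        rw [hc, pow_mul, hζ.pow_eq_one, one_pow]
      have e1 : ζ^(2*N+1) = ζ^2 := by
        rw [show 2*N+1 = (2*N-1) + 2 by omega, pow_add, hK1, one_mul]
      have e2 : ζ^(2*N) = ζ := by
        rw [show 2*N = (2*N-1) + 1 by omega, pow_add, hK1, one_mul, pow_one]
      rw [e1, e2] at heq
      have h2n : ((2:ℂ)^n) ≠ 0 := pow_ne_zero _ two_ne_zero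
      apply hsq
      have : (2:ℂ)^n * (ζ^2 - 1) = 0 := by linear_combination heq
      rcases mul_eq_zero.mp this with h | h
      · exact absurd h h2n
      · exact sub_eq_zero.mp h

lemma sin_exp_helper (x : ℝ) (j : ℕ) :
    2 * Complex.I * Complex.exp (x * Complex.I)^j * (Real.sin (j * x) : ℂ)
      = Complex.exp (x * Complex.I)^(2*j) - 1 := by
  have e1 : Complex.exp (x * Complex.I) ^ j = Complex.exp ((j * x : ℝ) * Complex.I) := by
    rw [← Complex.exp_nat_mul]
    push_cast
    ring_nf
  have e2 : Complex.exp ((j*x : ℝ) * Complex.I) * Complex.exp (-((j*x : ℝ) * Complex.I)) = 1 := by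
    rw [← Complex.exp_add]
    simp
  rw [Complex.ofReal_sin, Complex.sin, e1, mul_comm 2 j, pow_mul]
  set E := Complex.exp ((j*x : ℝ) * Complex.I)
  set A := Complex.exp (-((j*x : ℝ) * Complex.I))
  have hI : (Complex.I)^2 = -1 := Complex.I_sq
  have h2' : -(↑(j*x : ℝ) * Complex.I) = -↑(j*x:ℝ) * Complex.I := by ring
  rw [show Complex.exp (-↑(j*x:ℝ) * Complex.I) = A by rw [← h2']]
  linear_combination (E*A - E^2) * hI - e2 - (Complex.exp ((x:ℂ) * Complex.I)^j + E) * e1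

/-- No rational multiple of `π` in `(0, π)` solves the equation
`-(1/(2^(n+1)-1)) * tan (k/2) = tan (N*k)`. -/
theorem no_rational_pi_solution (n N : ℕ) (hn : 1 ≤ n) (hN : 1 ≤ N)
    (k : ℝ) (hk : k ∈ Set.Ioo 0 π)
    (hsol : -(1 / (2 ^ (n + 1) - 1)) * Real.tan (k / 2) = Real.tan (N * k)) :
    ¬ ∃ q : ℚ, k = π * (q : ℝ) := by
  rintro ⟨q, rfl⟩
  obtain ⟨hk0, hkπ⟩ := hk
  have hπ := Real.pi_pos
  set k := π * (q:ℝ) with hkdef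
  -- positivity facts
  have h2le : (2:ℝ) ≤ 2^(n+1) := by
    calc (2:ℝ) = 2^1 := (pow_one 2).symm
    _ ≤ 2^(n+1) := by apply pow_le_pow_right₀ one_le_two; omega
  have hc : (0:ℝ) < 2^(n+1) - 1 := by linarith
  have ha0 : 0 < k/2 := by linarith
  have haπ : k/2 < π/2 := by linarith
  have htanpos : 0 < Real.tan (k/2) := Real.tan_pos_of_pos_of_lt_pi_div_two ha0 haπ
  have hcosa : Real.cos (k/2) ≠ 0 := (Real.cos_pos_of_mem_Ioo ⟨by linarith, haπ⟩).ne'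
  have htanneg : Real.tan (N*k) < 0 := by
    rw [← hsol]
    have h1 : 0 < 1 / ((2:ℝ)^(n+1) - 1) * Real.tan (k/2) := by positivity
    linarith
  have hcosb : Real.cos (N*k) ≠ 0 := by
    intro h
    rw [Real.tan_eq_sin_div_cos, h, div_zero] at htanneg
    exact lt_irrefl 0 htanneg
  have hprod : ((2:ℝ)^(n+1) - 1) * (Real.sin (N*k) * Real.cos (k/2))
      + Real.sin (k/2) * Real.cos (N*k) = 0 := by
    rw [Real.tan_eq_sin_div_cos, Real.tan_eq_sin_div_cos] at hsol
    field_simp at hsol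
    rw [eq_div_iff (by rwa [mul_comm]), mul_comm k (N:ℝ)] at hsol
    linarith
  -- the key sine identity
  have hM1 : ((2*N+1 : ℕ) : ℝ) * (k/2) = N*k + k/2 := by push_cast; ring
  have hM2 : ((2*N-1 : ℕ) : ℝ) * (k/2) = N*k - k/2 := by
    rw [Nat.cast_sub (by omega)]
    push_cast
    ring
  have E : (2:ℝ)^n * Real.sin ((2*N+1 : ℕ) * (k/2))
      + ((2:ℝ)^n - 1) * Real.sin ((2*N-1 : ℕ) * (k/2)) = 0 := by
    rw [hM1, hM2, Real.sin_add, Real.sin_sub]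
    ring_nf
    ring_nf at hprod
    linarith
  -- complexify
  set u := Complex.exp ((k/2 : ℝ) * Complex.I) with hu
  have hu1 := sin_exp_helper (k/2) (2*N+1)
  have hu2 := sin_exp_helper (k/2) (2*N-1)
  have EC : (2:ℂ)^n * (Real.sin ((2*N+1:ℕ) * (k/2)) : ℂ)
      + ((2:ℂ)^n - 1) * (Real.sin ((2*N-1:ℕ)*(k/2)) : ℂ) = 0 := by
    exact_mod_cast congrArg (fun x : ℝ => (x : ℂ)) E
  obtain ⟨M, hM⟩ : ∃ M, 2*N-1 = M := ⟨2*N-1, rfl⟩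
  have hM3 : 2*N+1 = M + 2 := by omega
  rw [hM3] at hu1 EC
  rw [hM] at hu2 EC
  set ζ : ℂ := u^2 with hζdef
  have heq : (2:ℂ)^n * ζ^(M+2) + ((2:ℂ)^n - 1) * ζ^(M+1) - ((2:ℂ)^n - 1) * ζ - 2^n = 0 := by
    rw [hζdef]
    rw [← pow_mul, ← pow_mul]
    linear_combination (2*Complex.I*u^(M+2)) * EC - (2:ℂ)^n * hu1
      - ((2:ℂ)^n - 1) * u^2 * hu2
  have heq' : (2:ℂ)^n * ζ^(2*N+1) + ((2:ℂ)^n - 1) * ζ^(2*N) - ((2:ℂ)^n - 1) * ζ - 2^n = 0 := by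
    rw [show 2*N+1 = M+2 by omega, show 2*N = M+1 by omega]
    exact heq
  -- ζ is a root of unity
  -- q is positive
  have hq0 : (0:ℝ) < (q:ℝ) := by
    rcases mul_pos_iff.mp hk0 with ⟨-, h⟩ | ⟨h, -⟩
    · exact h
    · linarith
  have hqden : (0:ℝ) < (q.den : ℝ) := by exact_mod_cast q.pos
  have hqnum : (0:ℚ) < q := by exact_mod_cast hq0
  have hnum0 : 0 < q.num := Rat.num_pos.mpr hqnum
  have hqd : (q:ℝ) * (q.den : ℝ) = (q.num : ℝ) := by
    rw [Rat.cast_def]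
    field_simp
  have hroot : ζ^(2*q.den) = 1 := by
    rw [hζdef, ← pow_mul, hu, ← Complex.exp_nat_mul]
    have harg : ((2*(2*q.den) : ℕ) : ℂ) * (((k/2 : ℝ)) * Complex.I)
        = (q.num : ℂ) * (2 * (π:ℝ) * Complex.I) := by
      have hre : ((2*(2*q.den) : ℕ) : ℝ) * (k/2) = (q.num : ℝ) * (2 * π) := by
        push_cast
        rw [hkdef]
        linear_combination (2*π) * hqd
      calc ((2*(2*q.den) : ℕ) : ℂ) * (((k/2 : ℝ)) * Complex.I)
          = (((2*(2*q.den) : ℕ) : ℝ) * (k/2) : ℝ) * Complex.I := by push_cast; ring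
        _ = (((q.num : ℝ) * (2 * π) : ℝ)) * Complex.I := by rw [hre]
        _ = (q.num : ℂ) * (2 * (π:ℝ) * Complex.I) := by push_cast; ring
    rw [harg]
    exact Complex.exp_int_mul_two_pi_mul_I q.num
  -- ζ is not ±1
  have hζexp : ζ = Complex.exp ((k:ℝ) * Complex.I) := by
    rw [hζdef, hu, ← Complex.exp_nat_mul]
    congr 1
    push_cast
    ring
  have hsk : 0 < Real.sin k := Real.sin_pos_of_pos_of_lt_pi hk0 hkπ
  have him : ζ.im = Real.sin k := by rw [hζexp, Complex.exp_ofReal_mul_I_im]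
  have h1 : ζ ≠ 1 := by
    intro h
    rw [h] at him
    simp at him
    linarith
  have h2 : ζ ≠ -1 := by
    intro h
    rw [h] at him
    simp at him
    linarith
  -- order of ζ
  have hfin : IsOfFinOrder ζ := by
    rw [isOfFinOrder_iff_pow_eq_one]
    exact ⟨2*q.den, by have := q.pos; omega, hroot⟩
  have hm : 0 < orderOf ζ := hfin.orderOf_pos
  exact main_nt n N (orderOf ζ) hn hN ζ hm (IsPrimitiveRoot.orderOf ζ) h1 h2 heq'
end

section
/- For integers m ≥ 1 and N ≥ 1, the polynomial g_{m,N}(x) = 2^m x^{2N} + (2^{m+1}-1)(x^{2N-1} + x^{2N-2} + ... + x) + 2^m is irreducible over ℤ. -/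
open Polynomial Finset


noncomputable def gg (m N : ℕ) : ℤ[X] :=
  C (2 ^ m : ℤ) * X ^ (2 * N)
    + C ((2 : ℤ) ^ (m + 1) - 1) * ∑ j ∈ Finset.Ico 1 (2 * N), X ^ j
    + C (2 ^ m : ℤ)

lemma coeff_sum_pow {R : Type*} [Semiring R] (s : Finset ℕ) (k : ℕ) :
    (∑ j ∈ s, (X : R[X]) ^ j).coeff k = if k ∈ s then 1 else 0 := by
  rw [finset_sum_coeff]
  simp only [coeff_X_pow]
  rw [Finset.sum_ite_eq s k (fun _ => 1)]

lemma map_gg {R : Type*} [CommRing R] (m N : ℕ) :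
    (gg m N).map (Int.castRingHom R) =
      C ((2 : R) ^ m) * X ^ (2 * N)
        + C ((2 : R) ^ (m + 1) - 1) * ∑ j ∈ Finset.Ico 1 (2 * N), X ^ j
        + C ((2 : R) ^ m) := by
  simp only [gg, Polynomial.map_add, Polynomial.map_mul, Polynomial.map_pow,
    Polynomial.map_sum, Polynomial.map_C, Polynomial.map_X, map_sub, map_one, map_pow,
    Int.coe_castRingHom, Int.cast_ofNat, Int.cast_pow]
  norm_num [map_ofNat]

lemma coeff_gg (m N k : ℕ) :
    (gg m N).coeff k = (if k = 2 * N then 2 ^ m else 0)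
      + (if k ∈ Finset.Ico 1 (2 * N) then 2 ^ (m + 1) - 1 else 0)
      + (if k = 0 then 2 ^ m else 0) := by
  simp only [gg, coeff_add, coeff_C_mul, coeff_X_pow, coeff_sum_pow, coeff_C, mul_ite,
    mul_one, mul_zero]

lemma coeff_gg_top (m N : ℕ) (hN : 1 ≤ N) : (gg m N).coeff (2 * N) = 2 ^ m := by
  rw [coeff_gg]
  simp [Finset.mem_Ico]
  omega

lemma coeff_gg_zero (m N : ℕ) (hN : 1 ≤ N) : (gg m N).coeff 0 = 2 ^ m := by
  rw [coeff_gg]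
  simp [Finset.mem_Ico]
  omega

lemma coeff_gg_one (m N : ℕ) (hN : 1 ≤ N) : (gg m N).coeff 1 = 2 ^ (m + 1) - 1 := by
  rw [coeff_gg]
  have h1 : (1 : ℕ) ≠ 2 * N := by omega
  have h2 : (1 : ℕ) ∈ Finset.Ico 1 (2 * N) := by simp [Finset.mem_Ico]; omega
  simp [h1, h2]

lemma coeff_gg_high (m N : ℕ) (k : ℕ) (hk : 2 * N < k) : (gg m N).coeff k = 0 := by
  rw [coeff_gg]
  have h1 : k ≠ 2 * N := by omega
  have h2 : k ∉ Finset.Ico 1 (2 * N) := by simp [Finset.mem_Ico]; omega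
  have h3 : k ≠ 0 := by omega
  simp [h1, h2, h3]

lemma natDegree_gg (m N : ℕ) (hN : 1 ≤ N) : (gg m N).natDegree = 2 * N := by
  refine le_antisymm (natDegree_le_iff_coeff_eq_zero.2 fun k hk => coeff_gg_high m N k hk) ?_
  exact le_natDegree_of_ne_zero (by rw [coeff_gg_top m N hN]; positivity)

lemma leadingCoeff_gg (m N : ℕ) (hN : 1 ≤ N) : (gg m N).leadingCoeff = 2 ^ m := by
  rw [leadingCoeff, natDegree_gg m N hN, coeff_gg_top m N hN]

lemma gg_ne_zero (m N : ℕ) (hN : 1 ≤ N) : gg m N ≠ 0 := by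
  intro h
  have := coeff_gg_top m N hN
  rw [h] at this
  simp at this
  have : (0:ℤ) < 2 ^ m := by positivity
  omega

lemma Ico_sum_eq {R : Type*} [CommRing R] (n : ℕ) (hn : 1 ≤ n) (z : R) :
    (z - 1) * ∑ j ∈ Finset.Ico 1 n, z ^ j = z ^ n - z := by
  have h0 : (0 : ℕ) < n := hn
  have h1 : ∑ j ∈ Finset.Ico 0 n, z ^ j = z ^ 0 + ∑ j ∈ Finset.Ico 1 n, z ^ j :=
    Finset.sum_eq_sum_Ico_succ_bot h0 _
  have h2 : ((z - 1) * ∑ j ∈ Finset.range n, z ^ j) = z ^ n - 1 := mul_geom_sum z n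
  rw [Finset.range_eq_Ico, h1] at h2
  rw [pow_zero] at h2
  linear_combination h2

lemma eval_gg_rel {R : Type*} [CommRing R] (m N : ℕ) (hN : 1 ≤ N) (z : R)
    (hz : eval z ((gg m N).map (Int.castRingHom R)) = 0) :
    (2 : R) ^ m * (z ^ (2 * N + 1) - 1) + ((2 : R) ^ m - 1) * (z ^ (2 * N) - z) = 0 := by
  rw [map_gg] at hz
  simp only [eval_add, eval_mul, eval_C, eval_pow, eval_X, eval_finset_sum] at hz
  have hS := Ico_sum_eq (2 * N) (by omega) z
  have h2 : (2 : R) ^ (m + 1) = 2 * 2 ^ m := by rw [pow_succ]; ring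
  rw [h2] at hz
  have hzz : z ^ (2 * N + 1) = z ^ (2 * N) * z := by rw [pow_succ]
  rw [hzz]
  linear_combination (z - 1) * hz - (2 * (2:R)^m - 1) * hS

lemma norm_sq_helper (z : ℂ) (a : ℝ) :
    ‖(a : ℂ) * z + ((a : ℂ) - 1)‖ ^ 2 - ‖((a : ℂ) - 1) * z + (a : ℂ)‖ ^ 2
      = (2 * a - 1) * (‖z‖ ^ 2 - 1) := by
  have hc : ∀ w : ℂ, ((‖w‖ : ℂ)) ^ 2 = w * (starRingEnd ℂ) w := by
    intro w
    rw [Complex.mul_conj]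
    norm_cast
    rw [← Complex.sq_norm w]
  have key : ((‖(a : ℂ) * z + ((a : ℂ) - 1)‖ ^ 2 - ‖((a : ℂ) - 1) * z + (a : ℂ)‖ ^ 2 : ℝ) : ℂ)
      = (((2 * a - 1) * (‖z‖ ^ 2 - 1) : ℝ) : ℂ) := by
    push_cast
    rw [hc, hc, hc]
    simp only [map_add, map_mul, map_sub, map_one, Complex.conj_ofReal]
    ring
  exact_mod_cast key

lemma norm_eq_one_of_root (m N : ℕ) (hm : 1 ≤ m) (hN : 1 ≤ N) (z : ℂ)
    (hz : eval z ((gg m N).map (Int.castRingHom ℂ)) = 0) : ‖z‖ = 1 := by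
  have hrel := eval_gg_rel m N hN z hz
  set a : ℝ := 2 ^ m with ha
  have hac : ((a : ℂ)) = (2 : ℂ) ^ m := by push_cast [ha]; ring
  have hfac : z ^ (2 * N) * ((a : ℂ) * z + ((a : ℂ) - 1)) = ((a : ℂ) - 1) * z + (a : ℂ) := by
    rw [hac]
    have hzz : z ^ (2 * N + 1) = z ^ (2 * N) * z := by rw [pow_succ]
    linear_combination hrel + (2:ℂ)^m * hzz
  have hnorm : ‖z‖ ^ (2 * N) * ‖(a : ℂ) * z + ((a : ℂ) - 1)‖
      = ‖((a : ℂ) - 1) * z + (a : ℂ)‖ := by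
    rw [← norm_pow, ← norm_mul, hfac]
  have key := norm_sq_helper z a
  set r := ‖z‖ with hr
  set u := ‖(a : ℂ) * z + ((a : ℂ) - 1)‖ with hu
  set v := ‖((a : ℂ) - 1) * z + (a : ℂ)‖ with hv
  have hu0 : 0 ≤ u := norm_nonneg _
  have hv0 : 0 ≤ v := norm_nonneg _
  have hr0 : 0 ≤ r := norm_nonneg _
  have ha2 : (2 : ℝ) ≤ a := by
    rw [ha]
    calc (2:ℝ) = 2 ^ 1 := (pow_one 2).symm
    _ ≤ 2 ^ m := by apply pow_le_pow_right₀ <;> norm_num [hm]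
  by_contra hne
  rcases lt_or_gt_of_ne hne with hlt | hgt
  · -- r < 1
    have hpow : r ^ (2 * N) ≤ 1 := pow_le_one₀ hr0 hlt.le
    have hr2 : r ^ 2 < 1 := by nlinarith
    have huv : u ^ 2 < v ^ 2 := by nlinarith
    have h1 : v ≤ u := by
      calc v = r ^ (2 * N) * u := hnorm.symm
      _ ≤ 1 * u := by apply mul_le_mul_of_nonneg_right hpow hu0
      _ = u := one_mul u
    nlinarith
  · -- r > 1
    have hpow : 1 ≤ r ^ (2 * N) := one_le_pow₀ hgt.le
    have hr2 : 1 < r ^ 2 := by nlinarith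
    have huv : v ^ 2 < u ^ 2 := by nlinarith
    have hvu : v < u := by nlinarith
    have hu0' : 0 < u := lt_of_le_of_lt hv0 hvu
    have : u ≤ v := by
      calc u = 1 * u := (one_mul u).symm
      _ ≤ r ^ (2 * N) * u := by apply mul_le_mul_of_nonneg_right hpow hu0
      _ = v := hnorm
    nlinarith

lemma eval_one_gg (m N : ℕ) (hN : 1 ≤ N) : 0 < eval 1 (gg m N) := by
  simp only [gg, eval_add, eval_mul, eval_C, eval_pow, eval_X, eval_finset_sum, one_pow,
    Finset.sum_const, Nat.card_Ico, nsmul_eq_mul, mul_one]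
  have h1 : (0:ℤ) < 2 ^ m := by positivity
  have h2 : (0:ℤ) ≤ (2:ℤ) ^ (m+1) - 1 := by
    have : (1:ℤ) ≤ 2 ^ (m+1) := one_le_pow₀ (by norm_num)
    omega
  have h3 : (0:ℤ) ≤ ((2 * N - 1 : ℕ) : ℤ) := Int.natCast_nonneg _
  nlinarith

lemma eval_neg_one_gg (m N : ℕ) (hN : 1 ≤ N) : eval (-1) (gg m N) = 1 := by
  simp only [gg, eval_add, eval_mul, eval_C, eval_pow, eval_X, eval_finset_sum]
  have hsum : ∑ j ∈ Finset.Ico 1 (2 * N), (-1 : ℤ) ^ j = -1 := by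
    have h1 : ∑ j ∈ Finset.Ico 0 (2 * N), (-1:ℤ) ^ j
        = (-1:ℤ) ^ 0 + ∑ j ∈ Finset.Ico 1 (2 * N), (-1:ℤ) ^ j :=
      Finset.sum_eq_sum_Ico_succ_bot (by omega) _
    have h2 : ∑ j ∈ Finset.range (2 * N), (-1:ℤ) ^ j = 0 := by
      rw [neg_one_geom_sum, if_pos (even_two_mul N)]
    rw [Finset.range_eq_Ico, h1] at h2
    simp at h2
    linarith
  rw [hsum]
  have : (-1 : ℤ) ^ (2 * N) = 1 := by
    rw [pow_mul]; norm_num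
  rw [this]
  ring

lemma map_gg_zmod2 (m N : ℕ) (hm : 1 ≤ m) :
    (gg m N).map (Int.castRingHom (ZMod 2)) = ∑ j ∈ Finset.Ico 1 (2 * N), X ^ j := by
  rw [map_gg]
  have h2 : (2 : ZMod 2) = 0 := by decide
  have hm0 : (2 : ZMod 2) ^ m = 0 := by rw [h2, zero_pow (by omega)]
  have hm1 : (2 : ZMod 2) ^ (m + 1) - 1 = 1 := by rw [h2, zero_pow (by omega)]; decide
  rw [hm0, hm1]
  simp

lemma sum_pow_natDegree {N : ℕ} (hN : 1 ≤ N) :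
    (∑ j ∈ Finset.Ico 1 (2 * N), (X : (ZMod 2)[X]) ^ j).natDegree = 2 * N - 1 := by
  refine le_antisymm (natDegree_le_iff_coeff_eq_zero.2 fun k hk => ?_) ?_
  · rw [coeff_sum_pow]
    rw [if_neg]
    simp [Finset.mem_Ico]
    omega
  · apply le_natDegree_of_ne_zero
    rw [coeff_sum_pow, if_pos (by simp [Finset.mem_Ico]; omega)]
    exact one_ne_zero

lemma sum_pow_ne_zero {N : ℕ} (hN : 1 ≤ N) :
    (∑ j ∈ Finset.Ico 1 (2 * N), (X : (ZMod 2)[X]) ^ j) ≠ 0 := by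
  intro h
  have : (∑ j ∈ Finset.Ico 1 (2 * N), (X : (ZMod 2)[X]) ^ j).coeff 1 = 1 := by
    rw [coeff_sum_pow, if_pos (by simp [Finset.mem_Ico]; omega)]
  rw [h] at this
  simp at this

lemma not_both_even (m N : ℕ) (hm : 1 ≤ m) (hN : 1 ≤ N) {a b : ℤ[X]}
    (hab : a * b = gg m N) (ha : 1 ≤ a.natDegree) (hb : 1 ≤ b.natDegree)
    (h2a : (2:ℤ) ∣ a.leadingCoeff) (h2b : (2:ℤ) ∣ b.leadingCoeff) : False := by
  set φ := Int.castRingHom (ZMod 2)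
  have hmap : (a.map φ) * (b.map φ) = ∑ j ∈ Finset.Ico 1 (2 * N), (X : (ZMod 2)[X]) ^ j := by
    rw [← Polynomial.map_mul, hab, map_gg_zmod2 m N hm]
  have hS0 := sum_pow_ne_zero hN
  have hA0 : a.map φ ≠ 0 := fun h => hS0 (by rw [← hmap, h, zero_mul])
  have hB0 : b.map φ ≠ 0 := fun h => hS0 (by rw [← hmap, h, mul_zero])
  have hcoeff : ∀ p : ℤ[X], (2:ℤ) ∣ p.leadingCoeff → (p.map φ).coeff p.natDegree = 0 := by
    intro p hp
    rw [coeff_map]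
    obtain ⟨c, hc⟩ := hp
    show φ p.leadingCoeff = 0
    rw [hc, map_mul]
    have : φ 2 = 0 := by decide
    rw [this, zero_mul]
  have hAd : (a.map φ).natDegree < a.natDegree := by
    refine lt_of_le_of_ne (natDegree_map_le) fun h => ?_
    have := hcoeff a h2a
    rw [← h] at this
    exact hA0 (leadingCoeff_eq_zero.1 this)
  have hBd : (b.map φ).natDegree < b.natDegree := by
    refine lt_of_le_of_ne (natDegree_map_le) fun h => ?_
    have := hcoeff b h2b
    rw [← h] at this
    exact hB0 (leadingCoeff_eq_zero.1 this)
  have hdeg : a.natDegree + b.natDegree = 2 * N := by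
    have h0 : a ≠ 0 := fun h => gg_ne_zero m N hN (by rw [← hab, h, zero_mul])
    have h1 : b ≠ 0 := fun h => gg_ne_zero m N hN (by rw [← hab, h, mul_zero])
    rw [← natDegree_mul h0 h1, hab, natDegree_gg m N hN]
  have hsum : ((a.map φ) * (b.map φ)).natDegree ≤ (a.map φ).natDegree + (b.map φ).natDegree :=
    natDegree_mul_le
  rw [hmap, sum_pow_natDegree hN] at hsum
  omega

lemma gg_primitive (m N : ℕ) (hN : 1 ≤ N) : (gg m N).IsPrimitive := by
  intro r hr
  rw [Polynomial.C_dvd_iff_dvd_coeff] at hr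
  have h0 := hr 0
  have h1 := hr 1
  rw [coeff_gg_zero m N hN] at h0
  rw [coeff_gg_one m N hN] at h1
  have : r ∣ 1 := by
    have h2 : r ∣ 2 * 2 ^ m := Dvd.dvd.mul_left h0 2
    have h3 : (2:ℤ) * 2 ^ m = 2 ^ (m+1) := by rw [pow_succ]; ring
    rw [h3] at h2
    have := dvd_sub h2 h1
    simpa using this
  exact isUnit_of_dvd_one this

lemma cyclotomic_dvd_gg (m N : ℕ) (hN : 1 ≤ N) {ζ : ℂ} {d : ℕ} (hd : 0 < d)
    (hprim : IsPrimitiveRoot ζ d)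
    (hroot : eval ζ ((gg m N).map (Int.castRingHom ℂ)) = 0) :
    cyclotomic d ℤ ∣ gg m N := by
  have haev : (Polynomial.aeval ζ) ((gg m N).map (Int.castRingHom ℚ)) = 0 := by
    rw [aeval_def, eval₂_eq_eval_map, Polynomial.map_map]
    have : (algebraMap ℚ ℂ).comp (Int.castRingHom ℚ) = Int.castRingHom ℂ := by
      ext1; simp
    rw [this]
    exact hroot
  have h1 : minpoly ℚ ζ ∣ (gg m N).map (Int.castRingHom ℚ) := minpoly.dvd ℚ ζ haev
  rw [← cyclotomic_eq_minpoly_rat hprim hd] at h1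
  have h2 : (cyclotomic d ℤ).map (Int.castRingHom ℚ) ∣ (gg m N).map (Int.castRingHom ℚ) := by
    rwa [map_cyclotomic_int]
  exact (Polynomial.IsPrimitive.Int.dvd_iff_map_cast_dvd_map_cast _ _
    (cyclotomic.monic d ℤ).isPrimitive).2 h2

lemma poly_sum_identity {N : ℕ} (hN : 1 ≤ N) :
    ((X : (ZMod 2)[X]) ^ (2 * N) - X)
      = X * ((X : (ZMod 2)[X]) ^ (2 * N - 1) - 1) := by
  have h : 2 * N = (2 * N - 1) + 1 := by omega
  conv_lhs => rw [h, pow_succ]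
  ring

lemma cyc_dvd_pow_sub_one (m N : ℕ) (hm : 1 ≤ m) (hN : 1 ≤ N) {d : ℕ} (hd : 2 ≤ d)
    (hdvd : cyclotomic d ℤ ∣ gg m N) :
    cyclotomic d (ZMod 2) ∣ ((X : (ZMod 2)[X]) ^ (2 * N - 1) - 1) := by
  have h1 : cyclotomic d (ZMod 2) ∣ (gg m N).map (Int.castRingHom (ZMod 2)) := by
    obtain ⟨c, hc⟩ := hdvd
    exact ⟨c.map (Int.castRingHom (ZMod 2)), by
      rw [hc, Polynomial.map_mul, map_cyclotomic_int]⟩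
  rw [map_gg_zmod2 m N hm] at h1
  have h2 : cyclotomic d (ZMod 2) ∣ ((X : (ZMod 2)[X]) ^ (2 * N) - X) := by
    have hid := Ico_sum_eq (2 * N) (by omega) (X : (ZMod 2)[X])
    rw [← hid]
    exact Dvd.dvd.mul_left h1 _
  rw [poly_sum_identity hN] at h2
  have hX : ¬ (X : (ZMod 2)[X]) ∣ cyclotomic d (ZMod 2) := by
    rw [Polynomial.X_dvd_iff, cyclotomic_coeff_zero _ (by omega)]
    exact one_ne_zero
  have hcop : IsCoprime (cyclotomic d (ZMod 2)) (X : (ZMod 2)[X]) :=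
    ((Polynomial.prime_X.coprime_iff_not_dvd).2 hX).symm
  exact hcop.dvd_of_dvd_mul_left h2

lemma sf_pow_sub_one {N : ℕ} (hN : 1 ≤ N) :
    Squarefree ((X : (ZMod 2)[X]) ^ (2 * N - 1) - 1) := by
  have hcast : ((2 * N - 1 : ℕ) : ZMod 2) ≠ 0 := by
    have h : (2 * N - 1) % 2 = 1 := by omega
    have h2 : ((2 * N - 1 : ℕ) : ZMod 2) = (((2 * N - 1) % 2 : ℕ) : ZMod 2) :=
      (ZMod.natCast_mod _ 2).symm
    rw [h2, h]
    decide
  have hsep : ((X : (ZMod 2)[X]) ^ (2 * N - 1) - C 1).Separable :=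
    Polynomial.separable_X_pow_sub_C 1 hcast one_ne_zero
  rw [map_one] at hsep
  exact hsep.squarefree

lemma not_four_dvd (m N : ℕ) (hm : 1 ≤ m) (hN : 1 ≤ N) {d : ℕ} (hd : 3 ≤ d) (h4 : 4 ∣ d)
    (hdvd : cyclotomic d ℤ ∣ gg m N) : False := by
  obtain ⟨e, he⟩ : ∃ e, d = e * 2 := ⟨d / 2, by omega⟩
  have he2 : 2 ∣ e := by omega
  have hsq : cyclotomic d (ZMod 2) = (cyclotomic e (ZMod 2)) ^ 2 := by
    have hexp := cyclotomic_expand_eq_cyclotomic Nat.prime_two he2 (ZMod 2)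
    have hchar := Polynomial.map_frobenius_expand (p := 2) (cyclotomic e (ZMod 2))
    rw [ZMod.frobenius_zmod, Polynomial.map_id] at hchar
    rw [← he] at hexp
    rw [← hexp, hchar]
  have h1 := cyc_dvd_pow_sub_one m N hm hN (by omega) hdvd
  rw [hsq] at h1
  have hsf := sf_pow_sub_one hN
  have hunit : IsUnit (cyclotomic e (ZMod 2)) := hsf _ (by rwa [← sq])
  have hdeg : 0 < (cyclotomic e (ZMod 2)).natDegree := by
    rw [natDegree_cyclotomic]
    exact Nat.totient_pos.2 (by omega)
  exact Polynomial.not_isUnit_of_natDegree_pos _ hdeg hunit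

lemma odd_part_dvd {N : ℕ} (hN : 1 ≤ N) {t : ℕ} (ht : ¬ 2 ∣ t) (ht2 : 2 ≤ t)
    (hdvd : cyclotomic t (ZMod 2) ∣ ((X : (ZMod 2)[X]) ^ (2 * N - 1) - 1)) :
    t ∣ 2 * N - 1 := by
  set F := AlgebraicClosure (ZMod 2)
  have hne : ((t : ℕ) : F) ≠ 0 := by
    rw [Ne, CharP.cast_eq_zero_iff F 2 t]
    exact ht
  haveI : NeZero ((t : ℕ) : F) := ⟨hne⟩
  have hdvdF : cyclotomic t F ∣ ((X : F[X]) ^ (2 * N - 1) - 1) := by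
    obtain ⟨c, hc⟩ := hdvd
    refine ⟨c.map (algebraMap (ZMod 2) F), ?_⟩
    have := congrArg (Polynomial.map (algebraMap (ZMod 2) F)) hc
    rw [Polynomial.map_mul, map_cyclotomic, Polynomial.map_sub, Polynomial.map_pow,
      Polynomial.map_X, Polynomial.map_one] at this
    exact this
  have hdegne : (cyclotomic t F).degree ≠ 0 := by
    rw [degree_cyclotomic]
    have hpos := Nat.totient_pos.2 (show 0 < t by omega)
    exact_mod_cast hpos.ne'
  obtain ⟨β, hβ⟩ := IsAlgClosed.exists_root (cyclotomic t F) hdegne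
  have hβprim : IsPrimitiveRoot β t := (Polynomial.isRoot_cyclotomic_iff).1 hβ
  have hβpow : β ^ (2 * N - 1) = 1 := by
    obtain ⟨c, hc⟩ := hdvdF
    have : Polynomial.eval β ((X : F[X]) ^ (2 * N - 1) - 1) = 0 := by
      rw [hc, eval_mul, hβ.eq_zero, zero_mul]
    simpa [sub_eq_zero] using this
  exact hβprim.dvd_of_pow_eq_one _ hβpow

lemma no_rou (m N : ℕ) (hm : 1 ≤ m) (hN : 1 ≤ N) (ζ : ℂ) {k : ℕ} (hk : 0 < k)
    (hζk : ζ ^ k = 1)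
    (hroot : eval ζ ((gg m N).map (Int.castRingHom ℂ)) = 0) : False := by
  have hfin : IsOfFinOrder ζ := isOfFinOrder_iff_pow_eq_one.2 ⟨k, hk, hζk⟩
  set d := orderOf ζ with hdd
  clear_value d
  have hd : 0 < d := by rw [hdd]; exact hfin.orderOf_pos
  have hprim : IsPrimitiveRoot ζ d := by
    rw [hdd]
    exact ⟨pow_orderOf_eq_one ζ, fun l hl => orderOf_dvd_of_pow_eq_one hl⟩
  -- ζ ≠ 1
  have hζ1 : ζ ≠ 1 := by
    intro h
    rw [h] at hroot
    have : ((eval 1 (gg m N) : ℤ) : ℂ) = 0 := by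
      rw [← hroot, eval_one_map]
      rfl
    have h2 := eval_one_gg m N hN
    have h3 : (eval 1 (gg m N) : ℤ) = 0 := by exact_mod_cast this
    omega
  -- ζ ≠ -1
  have hζm1 : ζ ≠ -1 := by
    intro h
    rw [h] at hroot
    have : ((eval (-1) (gg m N) : ℤ) : ℂ) = 0 := by
      rw [← hroot, Polynomial.eval_map, show ((-1 : ℂ)) = (Int.castRingHom ℂ) (-1) by simp,
        Polynomial.eval₂_hom]
      rfl
    rw [eval_neg_one_gg m N hN] at this
    simpa using this
  have hd1 : d ≠ 1 := fun h => hζ1 (by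
    have := hprim.pow_eq_one
    rw [h, pow_one] at this
    exact this)
  have hd2 : d ≠ 2 := by
    intro h
    have h2 : ζ ^ 2 = 1 := by rw [← h]; exact hprim.pow_eq_one
    have : (ζ - 1) * (ζ + 1) = 0 := by linear_combination h2
    rcases mul_eq_zero.1 this with h' | h'
    · exact hζ1 (by linear_combination h')
    · exact hζm1 (by linear_combination h')
  have hd3 : 3 ≤ d := by omega
  have hcyc := cyclotomic_dvd_gg m N hN hd hprim hroot
  have h4 : ¬ 4 ∣ d := fun h => not_four_dvd m N hm hN hd3 h hcyc
  have hrel := eval_gg_rel m N hN ζ hroot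
  rcases Nat.even_or_odd d with hev | hodd
  · -- d even, d = 2t with t odd
    obtain ⟨w, hw⟩ := hev
    obtain ⟨t, ht⟩ : ∃ t, d = t * 2 := ⟨d / 2, by omega⟩
    have htodd : ¬ 2 ∣ t := by omega
    have ht3 : 3 ≤ t := by omega
    have hcycd : cyclotomic d (ZMod 2) = cyclotomic t (ZMod 2) := by
      have hexp := cyclotomic_expand_eq_cyclotomic_mul Nat.prime_two htodd (ZMod 2)
      have hchar := Polynomial.map_frobenius_expand (p := 2) (cyclotomic t (ZMod 2))
      rw [ZMod.frobenius_zmod, Polynomial.map_id] at hchar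
      rw [hchar, ← ht, sq] at hexp
      exact (mul_right_cancel₀ (cyclotomic_ne_zero t (ZMod 2)) hexp).symm
    have hdvd2 : cyclotomic t (ZMod 2) ∣ ((X : (ZMod 2)[X]) ^ (2 * N - 1) - 1) := by
      rw [← hcycd]
      exact cyc_dvd_pow_sub_one m N hm hN (by omega) hcyc
    have htdvd : t ∣ 2 * N - 1 := odd_part_dvd hN htodd (by omega) hdvd2
    -- ζ^t = -1
    have hζt : ζ ^ t = -1 := by
      have hsq : (ζ ^ t) ^ 2 = 1 := by
        rw [← pow_mul, ← ht]
        exact hprim.pow_eq_one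
      have hne : ζ ^ t ≠ 1 := by
        intro h
        have h5 := hprim.dvd_of_pow_eq_one t h
        have := Nat.le_of_dvd (by omega) h5
        omega
      have : (ζ ^ t - 1) * (ζ ^ t + 1) = 0 := by linear_combination hsq
      rcases mul_eq_zero.1 this with h' | h'
      · exact absurd (by linear_combination h') hne
      · linear_combination h'
    obtain ⟨u, hu⟩ := htdvd
    have huodd : Odd u := by
      have hodd21 : Odd (2 * N - 1) := ⟨N - 1, by omega⟩
      rw [hu] at hodd21
      exact (Nat.odd_mul.1 hodd21).2
    have hpow1 : ζ ^ (2 * N - 1) = -1 := by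
      rw [hu, pow_mul, hζt]
      exact Odd.neg_one_pow huodd
    have e1 : ζ ^ (2 * N) = -ζ := by
      have : 2 * N = (2 * N - 1) + 1 := by omega
      rw [this, pow_succ, hpow1]
      ring
    have e2 : ζ ^ (2 * N + 1) = -ζ ^ 2 := by
      have : 2 * N + 1 = (2 * N - 1) + 2 := by omega
      rw [this, pow_add, hpow1]
      ring
    rw [e1, e2] at hrel
    -- now: 2^m * (-ζ^2 - 1) + (2^m - 1) * (-ζ - ζ) = 0
    have heq : (2:ℂ) ^ m * ζ ^ 2 + 2 * ((2:ℂ) ^ m - 1) * ζ + 2 ^ m = 0 := by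
      linear_combination -hrel
    rcases Nat.eq_or_lt_of_le hm with hm1 | hm2
    · -- m = 1
      rw [← hm1] at heq
      norm_num at heq
      have h3 : ζ ^ 3 = 1 := by linear_combination (ζ / 2 - 1/2) * heq
      have h5 := Nat.le_of_dvd (by norm_num) (hprim.dvd_of_pow_eq_one 3 h3)
      omega
    · -- m ≥ 2
      have h2m : (2:ℂ) ^ m = 2 * 2 ^ (m - 1) := by
        rw [← pow_succ']
        congr 1
        omega
      set q : ℚ[X] := C ((2:ℚ) ^ (m-1)) * X ^ 2 + C ((2:ℚ) ^ m - 1) * X + C ((2:ℚ) ^ (m-1))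
        with hq
      have haev : (Polynomial.aeval ζ) q = 0 := by
        rw [hq]
        simp only [map_add, map_mul, map_pow, aeval_C, aeval_X, map_sub, map_one, map_ofNat]
        rw [h2m] at heq ⊢
        linear_combination heq / 2
      have hqdeg : q.natDegree = 2 := natDegree_quadratic (by positivity)
      have hq0 : q ≠ 0 := fun h => by simp [h] at hqdeg
      have hpdvd : minpoly ℚ ζ ∣ q := minpoly.dvd ℚ ζ haev
      have hpcyc : cyclotomic d ℚ = minpoly ℚ ζ := cyclotomic_eq_minpoly_rat hprim hd
      have htot2 : Nat.totient d = 2 := by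
        have hle : (minpoly ℚ ζ).natDegree ≤ 2 := by
          rw [← hqdeg]
          exact natDegree_le_of_dvd hpdvd hq0
        rw [← hpcyc, natDegree_cyclotomic] at hle
        have hevt := Nat.totient_even (show 2 < d by omega)
        have hpos := Nat.totient_pos.2 hd
        obtain ⟨w, hw⟩ := hevt
        omega
      obtain ⟨r, hr⟩ := hpdvd
      have hζint : IsIntegral ℚ ζ := ⟨X ^ d - C 1, monic_X_pow_sub_C 1 (by omega), by
        simp [hprim.pow_eq_one, sub_eq_zero]⟩
      have hp0 : minpoly ℚ ζ ≠ 0 := minpoly.ne_zero hζint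
      have hr0 : r ≠ 0 := fun h => hq0 (by rw [hr, h, mul_zero])
      have hrdeg : r.natDegree = 0 := by
        have := natDegree_mul hp0 hr0
        rw [← hr, hqdeg, ← hpcyc, natDegree_cyclotomic, htot2] at this
        omega
      have hrC : r = C (r.coeff 0) := eq_C_of_natDegree_eq_zero hrdeg
      -- compare coefficients
      have hmonic : (minpoly ℚ ζ).Monic := minpoly.monic hζint
      have hpdeg : (minpoly ℚ ζ).natDegree = 2 := by
        rw [← hpcyc, natDegree_cyclotomic, htot2]
      have hcoeff2 : q.coeff 2 = (2:ℚ) ^ (m-1) := by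
        rw [hq]
        simp only [coeff_add, coeff_C_mul, coeff_X_pow, coeff_C, Polynomial.coeff_X, coeff_sub,
          coeff_one]
        norm_num
      have hcoeff1 : q.coeff 1 = (2:ℚ) ^ m - 1 := by
        rw [hq]
        simp only [coeff_add, coeff_C_mul, coeff_X_pow, coeff_C, Polynomial.coeff_X, coeff_sub,
          coeff_one]
        norm_num
      have hc : r.coeff 0 = (2:ℚ) ^ (m-1) := by
        have h2 := congrArg (fun p => Polynomial.coeff p 2) hr
        rw [hcoeff2, hrC] at h2
        rw [coeff_mul_C] at h2
        have : (minpoly ℚ ζ).coeff 2 = 1 := by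
          have := hmonic
          rw [Polynomial.Monic, Polynomial.leadingCoeff, hpdeg] at this
          exact this
        rw [this, one_mul] at h2
        exact h2.symm
      have hkey : (2:ℚ) ^ m - 1 = (minpoly ℚ ζ).coeff 1 * (2:ℚ) ^ (m-1) := by
        have h1 := congrArg (fun p => Polynomial.coeff p 1) hr
        rw [hcoeff1, hrC, coeff_mul_C, hc] at h1
        exact h1
      -- coeff 1 of cyclotomic is an integer
      have hint : ∃ z : ℤ, (minpoly ℚ ζ).coeff 1 = (z : ℚ) := by
        refine ⟨(cyclotomic d ℤ).coeff 1, ?_⟩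
        rw [← hpcyc, ← map_cyclotomic_int d ℚ, coeff_map]
        rfl
      obtain ⟨z, hz⟩ := hint
      rw [hz] at hkey
      have hkeyZ : (2:ℤ) ^ m - 1 = z * 2 ^ (m-1) := by exact_mod_cast hkey
      have hd1' : (2:ℤ) ∣ 2 ^ (m-1) := dvd_pow_self 2 (by omega)
      have hd2' : (2:ℤ) ∣ 2 ^ m := dvd_pow_self 2 (by omega)
      have hodd' : (2:ℤ) ∣ 2 ^ m - 1 := by
        rw [hkeyZ]
        exact Dvd.dvd.mul_left hd1' z
      obtain ⟨w2, hw2⟩ := hd2'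
      obtain ⟨w3, hw3⟩ := hodd'
      omega
  · -- d odd
    obtain ⟨w, hw⟩ := hodd
    have hdvd2 := cyc_dvd_pow_sub_one m N hm hN (by omega) hcyc
    have htdvd : d ∣ 2 * N - 1 := odd_part_dvd hN (by omega) (by omega) hdvd2
    have hpow1 : ζ ^ (2 * N - 1) = 1 := by
      obtain ⟨c, hc⟩ := htdvd
      rw [hc, pow_mul, hprim.pow_eq_one, one_pow]
    have e1 : ζ ^ (2 * N) = ζ := by
      have : 2 * N = (2 * N - 1) + 1 := by omega
      rw [this, pow_succ, hpow1, one_mul]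
    have e2 : ζ ^ (2 * N + 1) = ζ ^ 2 := by
      have : 2 * N + 1 = (2 * N - 1) + 2 := by omega
      rw [this, pow_add, hpow1, one_mul]
    rw [e1, e2] at hrel
    have hsq : ζ ^ 2 = 1 := by
      have h2 : (2:ℂ) ^ m ≠ 0 := pow_ne_zero _ two_ne_zero
      have : (2:ℂ) ^ m * (ζ ^ 2 - 1) = 0 := by linear_combination hrel
      rcases mul_eq_zero.1 this with h | h
      · exact absurd h h2
      · linear_combination h
    have := Nat.le_of_dvd (by norm_num) (hprim.dvd_of_pow_eq_one 2 hsq)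
    omega

open IntermediateField in
lemma monic_factor_false (m N : ℕ) (hm : 1 ≤ m) (hN : 1 ≤ N) {a b : ℤ[X]}
    (hab : a * b = gg m N) (hbdeg : 1 ≤ b.natDegree) (hb1 : b.leadingCoeff = 1) : False := by
  have hbmonic : b.Monic := hb1
  -- complex root of b
  have hbC : ((b.map (Int.castRingHom ℂ)).natDegree = b.natDegree) :=
    hbmonic.natDegree_map _
  have hdegpos : 0 < (b.map (Int.castRingHom ℂ)).degree := by
    rw [← natDegree_pos_iff_degree_pos, hbC]
    omega
  obtain ⟨ζ, hζ⟩ := Complex.exists_root hdegpos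
  have hζb : eval ζ (b.map (Int.castRingHom ℂ)) = 0 := hζ
  have hζG : eval ζ ((gg m N).map (Int.castRingHom ℂ)) = 0 := by
    rw [← hab, Polynomial.map_mul, eval_mul, hζb, mul_zero]
  -- ζ is an algebraic integer
  have hζint : IsIntegral ℤ ζ := ⟨b, hbmonic, by
    rw [eval₂_eq_eval_map, algebraMap_int_eq]
    exact hζb⟩
  have hζintQ : IsIntegral ℚ ζ := hζint.tower_top
  -- the number field ℚ(ζ)
  haveI : FiniteDimensional ℚ ℚ⟮ζ⟯ := IntermediateField.adjoin.finiteDimensional hζintQ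
  haveI : NumberField ℚ⟮ζ⟯ := ⟨⟩
  set x : ℚ⟮ζ⟯ := IntermediateField.AdjoinSimple.gen ℚ ζ with hxdef
  have hx : algebraMap ℚ⟮ζ⟯ ℂ x = ζ := IntermediateField.AdjoinSimple.algebraMap_gen ℚ ζ
  have hxint : IsIntegral ℤ x := by
    rwa [← isIntegral_algebraMap_iff (algebraMap ℚ⟮ζ⟯ ℂ).injective, hx]
  have hxb : Polynomial.aeval x b = 0 := by
    apply (algebraMap ℚ⟮ζ⟯ ℂ).injective
    rw [map_zero, ← aeval_algebraMap_apply, hx]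
    rw [aeval_def, eval₂_eq_eval_map, algebraMap_int_eq]
    exact hζb
  have hnorm : ∀ φ : ℚ⟮ζ⟯ →+* ℂ, ‖φ x‖ = 1 := by
    intro φ
    have hφb : eval (φ x) (b.map (Int.castRingHom ℂ)) = 0 := by
      have h1 : φ (Polynomial.aeval x b) = 0 := by rw [hxb, map_zero]
      rw [aeval_def, Polynomial.hom_eval₂] at h1
      have h2 : φ.comp (algebraMap ℤ ℚ⟮ζ⟯) = Int.castRingHom ℂ := by
        ext1
        simp
      rw [h2] at h1
      rw [eval_map]
      exact h1
    have hφG : eval (φ x) ((gg m N).map (Int.castRingHom ℂ)) = 0 := by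
      rw [← hab, Polynomial.map_mul, eval_mul, hφb, mul_zero]
    exact norm_eq_one_of_root m N hm hN _ hφG
  obtain ⟨n, hn, hxn⟩ := NumberField.Embeddings.pow_eq_one_of_norm_eq_one ℚ⟮ζ⟯ ℂ hxint hnorm
  have hζn : ζ ^ n = 1 := by
    rw [← hx, ← map_pow, hxn, map_one]
  exact no_rou m N hm hN ζ hn hζn hζG

lemma odd_factor_false (m N : ℕ) (hm : 1 ≤ m) (hN : 1 ≤ N) {a b : ℤ[X]}
    (hab : a * b = gg m N) (ha : 1 ≤ a.natDegree) (hb : 1 ≤ b.natDegree)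
    (hodd : ¬ (2:ℤ) ∣ b.leadingCoeff) : False := by
  have hlc : a.leadingCoeff * b.leadingCoeff = 2 ^ m := by
    rw [← leadingCoeff_mul, hab, leadingCoeff_gg m N hN]
  have hdvd : b.leadingCoeff ∣ (2:ℤ) ^ m := Dvd.intro_left _ hlc
  have habs : b.leadingCoeff.natAbs ∣ 2 ^ m := by
    have h1 := Int.natAbs_dvd_natAbs.2 hdvd
    simpa [Int.natAbs_pow] using h1
  obtain ⟨i, hi, hieq⟩ := (Nat.dvd_prime_pow Nat.prime_two).1 habs
  have hi0 : i = 0 := by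
    by_contra h
    apply hodd
    have h2 : 2 ∣ b.leadingCoeff.natAbs := by
      rw [hieq]
      exact dvd_pow_self 2 h
    have h3 : (2:ℤ) ∣ (b.leadingCoeff.natAbs : ℤ) := Int.natCast_dvd_natCast.2 h2
    exact Int.dvd_natAbs.1 h3
  rw [hi0, pow_zero] at hieq
  rcases Int.natAbs_eq_iff.1 hieq with h1 | h1
  · have h1' : b.leadingCoeff = 1 := by exact_mod_cast h1
    exact monic_factor_false m N hm hN hab hb h1'
  · have hab2 : (-a) * (-b) = gg m N := by rw [neg_mul_neg]; exact hab
    have hdb : 1 ≤ (-b).natDegree := by rwa [natDegree_neg]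
    have hlb : (-b).leadingCoeff = 1 := by
      have h1' : b.leadingCoeff = -1 := by exact_mod_cast h1
      rw [leadingCoeff_neg, h1']
      norm_num
    exact monic_factor_false m N hm hN hab2 hdb hlb

/-- The polynomial `g_{m,N}(x) = 2^m x^{2N} + (2^{m+1}-1)(x^{2N-1} + ⋯ + x) + 2^m`
is irreducible over `ℤ`. -/
theorem g_irreducible (m N : ℕ) (hm : 1 ≤ m) (hN : 1 ≤ N) :
    Irreducible
      (C (2 ^ m : ℤ) * X ^ (2 * N)
        + C ((2 : ℤ) ^ (m + 1) - 1) * ∑ j ∈ Finset.Ico 1 (2 * N), X ^ j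
        + C (2 ^ m : ℤ)) := by
  have hgg : (C (2 ^ m : ℤ) * X ^ (2 * N)
        + C ((2 : ℤ) ^ (m + 1) - 1) * ∑ j ∈ Finset.Ico 1 (2 * N), X ^ j
        + C (2 ^ m : ℤ)) = gg m N := rfl
  rw [hgg]
  constructor
  · exact Polynomial.not_isUnit_of_natDegree_pos _ (by rw [natDegree_gg m N hN]; omega)
  · intro a b hab
    by_contra hcon
    push_neg at hcon
    obtain ⟨hua, hub⟩ := hcon
    have hab' : a * b = gg m N := hab.symm
    have hadeg : 1 ≤ a.natDegree := by
      by_contra h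
      push_neg at h
      have hC : a = C (a.coeff 0) := eq_C_of_natDegree_eq_zero (by omega)
      have hdvd : C (a.coeff 0) ∣ gg m N := ⟨b, by rw [← hab', ← hC]⟩
      exact hua (hC ▸ isUnit_C.2 (gg_primitive m N hN _ hdvd))
    have hbdeg : 1 ≤ b.natDegree := by
      by_contra h
      push_neg at h
      have hC : b = C (b.coeff 0) := eq_C_of_natDegree_eq_zero (by omega)
      have hdvd : C (b.coeff 0) ∣ gg m N := ⟨a, by rw [← hab', ← hC]; ring⟩
      exact hub (hC ▸ isUnit_C.2 (gg_primitive m N hN _ hdvd))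
    by_cases h2b : (2:ℤ) ∣ b.leadingCoeff
    · by_cases h2a : (2:ℤ) ∣ a.leadingCoeff
      · exact not_both_even m N hm hN hab' hadeg hbdeg h2a h2b
      · exact odd_factor_false m N hm hN (by rw [mul_comm]; exact hab') hbdeg hadeg h2a
    · exact odd_factor_false m N hm hN hab' hadeg hbdeg h2b
end

section
/- Fix a positive integer m and let N_1 ≠ N_2 be positive integers. The solution sets in (0,π) of the equations -(1/(2^{m+1}-1)) tan(k/2) = tan(N_1 k) and -(1/(2^{m+1}-1)) tan(k/2) = tan(N_2 k) are disjoint. -/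
open Polynomial

/-- Auxiliary integer sequence. -/
def seqA (M : ℕ) : ℕ → ℤ
  | 0 => 2
  | 1 => -(2 ^ (M + 1) - 1)
  | (n + 2) => -(2 ^ (M + 1) - 1) * seqA M (n + 1) - 4 ^ M * seqA M n

lemma seqA_odd (M : ℕ) (hM : 1 ≤ M) : ∀ j, ¬ (2 ∣ seqA M (j + 1)) := by
  have h4 : (2 : ℤ) ∣ 4 ^ M := dvd_pow (by norm_num) (by omega)
  have hp2 : (2:ℤ) ∣ 2 ^ (M+1) := dvd_pow_self 2 (by omega)
  have h2 : ¬ ((2:ℤ) ∣ -(2 ^ (M + 1) - 1)) := by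
    rw [Int.dvd_neg]
    intro h
    obtain ⟨c, hc⟩ := h; obtain ⟨c2, hc2⟩ := hp2
    omega
  intro j
  induction j with
  | zero => exact fun h => h2 (by simpa [seqA] using h)
  | succ n ih =>
      intro h
      rw [show n + 1 + 1 = n + 2 from rfl, seqA] at h
      have hmul : (2:ℤ) ∣ -(2 ^ (M + 1) - 1) * seqA M (n + 1) := by
        have := dvd_add h (h4.mul_right (seqA M n))
        simpa using this
      rcases ((Int.prime_two.dvd_mul.mp hmul)) with h' | h'
      · exact h2 h'
      · exact ih h'

lemma seqA_rel (M : ℕ) (u : ℂ) (hu : 2 ^ M * (u ^ 2 + 1) + (2 ^ (M + 1) - 1) * u = 0) :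
    ∀ j, (seqA M j : ℂ) * u ^ j = ((2:ℂ) ^ M) ^ j * (u ^ (2 * j) + 1) := by
  have h4 : ((4:ℂ))^M = ((2:ℂ)^M)^2 := by
    rw [show (4:ℂ) = 2^2 by norm_num, ← pow_mul, ← pow_mul, Nat.mul_comm]
  intro j
  induction j using Nat.twoStepInduction with
  | zero => norm_num [seqA]
  | one => push_cast [seqA]; linear_combination -hu
  | more n ih1 ih2 =>
      show (seqA M (n+2) : ℂ) * u ^ (n+2) = _
      rw [seqA]
      push_cast
      linear_combination ((2:ℂ)^M * (u^2+1)) * ih2 - (((2:ℂ)^M)^2 * u^2) * ih1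
        - ((seqA M (n+1) : ℂ) * u^(n+1)) * hu - ((seqA M n : ℂ) * u^(n+2)) * h4

lemma key (m N d : ℕ) (hm : 1 ≤ m) (hN : 1 ≤ N) (hd : 1 ≤ d)
    (u : ℂ) (hud : u ^ (2 * d) = 1) (him : u.im ≠ 0)
    (heq : 2 ^ m * (u ^ (2 * N + 1) - 1) + (2 ^ m - 1) * (u ^ (2 * N) - u) = 0) : False := by
  -- basic facts about u
  have hu1 : u ≠ 1 := fun h => him (by simp [h])
  have hum1 : u ≠ -1 := fun h => him (by simp [h])
  have hu2 : u ^ 2 ≠ 1 := by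
    intro h
    have : (u - 1) * (u + 1) = 0 := by linear_combination h
    rcases mul_eq_zero.mp this with h' | h'
    · exact hu1 (by linear_combination h')
    · exact hum1 (by linear_combination h')
  set t := 2 * N - 1 with htdef
  have ht : 2 * N = t + 1 := by omega
  have ht1 : 1 ≤ t := by omega
  have htodd : t % 2 = 1 := by omega
  have hfin : IsOfFinOrder u := by
    rw [isOfFinOrder_iff_pow_eq_one]
    refine ⟨2 * d, ?_, hud⟩
    omega
  set o := orderOf u with hodef
  have hprim : IsPrimitiveRoot u o := IsPrimitiveRoot.orderOf u
  have ho : 0 < o := hfin.orderOf_pos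
  have ho1 : 1 < o := by
    by_contra hcon
    have h1 : o = 1 := by omega
    rw [hodef] at h1
    exact hu1 (orderOf_eq_one_iff.mp h1)
  -- the integer polynomial
  set R : Polynomial ℤ := Polynomial.C (2 ^ m) * (X ^ (t + 2) - 1)
      + Polynomial.C (2 ^ m - 1) * (X ^ (t + 1) - X) with hRdef
  have haeval : Polynomial.aeval u R = 0 := by
    simp only [hRdef, map_add, map_mul, map_sub, map_pow, map_one, Polynomial.aeval_X,
      Polynomial.aeval_C, map_ofNat]
    rw [show t + 2 = 2 * N + 1 by omega, show t + 1 = 2 * N by omega]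
    linear_combination heq
  have hdvdZ : Polynomial.cyclotomic o ℤ ∣ R := by
    rw [Polynomial.cyclotomic_eq_minpoly hprim ho]
    exact minpoly.isIntegrallyClosed_dvd (hprim.isIntegral ho) haeval
  -- reduce mod 2
  have hdvd2 : Polynomial.cyclotomic o (ZMod 2) ∣ X * (X ^ t - 1) := by
    have h := Polynomial.map_dvd (Int.castRingHom (ZMod 2)) hdvdZ
    rw [Polynomial.map_cyclotomic] at h
    have hmap : R.map (Int.castRingHom (ZMod 2)) = X * (X ^ t - 1) := by
      simp only [hRdef, Polynomial.map_add, Polynomial.map_mul, Polynomial.map_sub,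
        Polynomial.map_pow, Polynomial.map_one, Polynomial.map_X, Polynomial.map_C,
        Int.coe_castRingHom]
      have h1 : ((2 ^ m : ℤ) : ZMod 2) = 0 := by
        push_cast
        exact pow_eq_zero_iff (by omega) |>.mpr (by decide)
      have h2 : ((2 ^ m - 1 : ℤ) : ZMod 2) = 1 := by
        push_cast
        rw [pow_eq_zero_iff (n := m) (by omega) |>.mpr (by decide)]
        decide
      rw [h1, h2]
      simp only [Polynomial.C_0, Polynomial.C_1, zero_mul, one_mul]
      ring
    rwa [hmap] at h
  have hdvdt : Polynomial.cyclotomic o (ZMod 2) ∣ (X ^ t - 1 : Polynomial (ZMod 2)) := by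
    have hC0 : (Polynomial.cyclotomic o (ZMod 2)).coeff 0 = 1 :=
      Polynomial.cyclotomic_coeff_zero _ ho1
    have hcop : IsCoprime (Polynomial.cyclotomic o (ZMod 2)) (X : Polynomial (ZMod 2)) := by
      have hXd : (X : Polynomial (ZMod 2)) ∣
          Polynomial.cyclotomic o (ZMod 2) - Polynomial.C 1 := by
        rw [Polynomial.X_dvd_iff]
        simp [hC0]
      obtain ⟨q, hq⟩ := hXd
      rw [Polynomial.C_1] at hq
      exact ⟨1, -q, by linear_combination hq⟩
    exact hcop.dvd_of_dvd_mul_left hdvd2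
  -- squarefreeness of X^t - 1 over ZMod 2
  have htK : ((t : ZMod 2)) ≠ 0 := by
    rw [Ne, ZMod.natCast_eq_zero_iff]
    omega
  have hsf : Squarefree ((X : Polynomial (ZMod 2)) ^ t - 1) :=
    (Polynomial.X_pow_sub_one_separable_iff.mpr htK).squarefree
  -- decompose o = 2^a * b
  set a := o.factorization 2 with hadef
  set b := ordCompl[2] o with hbdef
  have hob : 2 ^ a * b = o := Nat.ordProj_mul_ordCompl_eq_self o 2
  have hb2 : ¬ 2 ∣ b := Nat.not_dvd_ordCompl Nat.prime_two ho.ne'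
  have hb0 : 0 < b := Nat.ordCompl_pos 2 ho.ne'
  have hunit : ¬ IsUnit (Polynomial.cyclotomic b (ZMod 2)) := by
    intro h
    have h0 := Polynomial.degree_eq_zero_of_isUnit h
    exact (Polynomial.degree_cyclotomic_pos b (ZMod 2) hb0).ne' h0
  have key2 : a ≤ 1 ∧ Polynomial.cyclotomic b (ZMod 2) ∣ (X ^ t - 1 : Polynomial (ZMod 2)) := by
    rcases Nat.eq_zero_or_pos a with ha0 | hapos
    · constructor
      · omega
      · have : o = b := by rw [← hob, ha0]; ring
        rwa [← this]
    · have hfact : Polynomial.cyclotomic o (ZMod 2)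
          = Polynomial.cyclotomic b (ZMod 2) ^ (2 ^ a - 2 ^ (a - 1)) := by
        rw [← hob]
        exact Polynomial.cyclotomic_mul_prime_pow_eq (ZMod 2) hb2 hapos
      have he1 : 1 ≤ 2 ^ a - 2 ^ (a - 1) := by
        have h1 : 2 ^ (a - 1) < 2 ^ a := Nat.pow_lt_pow_right (by norm_num) (by omega)
        omega
      have hΦb : Polynomial.cyclotomic b (ZMod 2) ∣ (X ^ t - 1 : Polynomial (ZMod 2)) := by
        refine dvd_trans ?_ hdvdt
        rw [hfact]
        exact dvd_pow_self _ (by omega)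
      refine ⟨?_, hΦb⟩
      by_contra hcon
      have ha2 : 2 ≤ a := by omega
      have he2 : 2 ≤ 2 ^ a - 2 ^ (a - 1) := by
        have h1 : 2 ^ (a - 1) ≥ 2 := by
          calc 2 = 2 ^ 1 := by norm_num
          _ ≤ 2 ^ (a - 1) := Nat.pow_le_pow_right (by norm_num) (by omega)
        have h2 : 2 ^ a = 2 * 2 ^ (a - 1) := by
          rw [← pow_succ']
          congr 1
          omega
        omega
      have hsq : Polynomial.cyclotomic b (ZMod 2) ^ 2 ∣ (X ^ t - 1 : Polynomial (ZMod 2)) := by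
        refine dvd_trans ?_ hdvdt
        rw [hfact]
        exact pow_dvd_pow _ he2
      exact hunit (hsf _ (by rw [← pow_two]; exact hsq))
  obtain ⟨ha1, hΦb⟩ := key2
  -- pass to the splitting field to conclude b ∣ t
  have hbt : b ∣ t := by
    set K := (Polynomial.cyclotomic b (ZMod 2)).SplittingField with hKdef
    haveI : CharP K 2 := charP_of_injective_algebraMap (algebraMap (ZMod 2) K).injective 2
    haveI : NeZero ((b : K)) := by
      constructor
      have hb1 : ((b : ZMod 2)) = 1 := by
        have h0 : ((b : ZMod 2)) ≠ 0 := by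
          rw [Ne, ZMod.natCast_eq_zero_iff]
          exact hb2
        revert h0
        generalize ((b : ZMod 2)) = x
        revert x
        decide
      rw [← map_natCast (algebraMap (ZMod 2) K) b, hb1, map_one]
      exact one_ne_zero
    have hdeg : ((Polynomial.cyclotomic b (ZMod 2)).map
        (algebraMap (ZMod 2) K)).degree ≠ 0 := by
      rw [Polynomial.degree_map]
      exact (Polynomial.degree_cyclotomic_pos b (ZMod 2) hb0).ne'
    obtain ⟨μ, hμ⟩ := Polynomial.Splits.exists_eval_eq_zero
      (Polynomial.SplittingField.splits _) hdeg
    have hroot : Polynomial.IsRoot (Polynomial.cyclotomic b K) μ := by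
      rw [Polynomial.IsRoot.def, ← Polynomial.map_cyclotomic _ (algebraMap (ZMod 2) K)]
      exact hμ
    have hμprim : IsPrimitiveRoot μ b := (Polynomial.isRoot_cyclotomic_iff).mp hroot
    have hdvdK : Polynomial.cyclotomic b K ∣ (X ^ t - 1 : Polynomial K) := by
      have h := Polynomial.map_dvd (algebraMap (ZMod 2) K) hΦb
      rwa [Polynomial.map_cyclotomic, Polynomial.map_sub, Polynomial.map_pow,
        Polynomial.map_X, Polynomial.map_one] at h
    have hμt : μ ^ t = 1 := by
      have := Polynomial.eval_eq_zero_of_dvd_of_eval_eq_zero hdvdK hroot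
      simpa [sub_eq_zero] using this
    exact hμprim.dvd_of_pow_eq_one t hμt
  -- hence o ∣ 2 * t and u ^ (2 * t) = 1
  have hodvd : o ∣ 2 * t := by
    rw [← hob]
    exact mul_dvd_mul (by calc (2:ℕ) ^ a ∣ 2 ^ 1 := pow_dvd_pow 2 ha1
                           _ = 2 := by norm_num) hbt
  have hu2t : u ^ (2 * t) = 1 := orderOf_dvd_iff_pow_eq_one.mp hodvd
  -- u ^ t = ± 1
  have hvsplit : (u ^ t - 1) * (u ^ t + 1) = 0 := by
    have h : u ^ t * u ^ t = u ^ (2 * t) := by rw [← pow_add]; congr 1; omega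
    linear_combination h + hu2t
  rcases mul_eq_zero.mp hvsplit with hv | hv
  · -- u ^ t = 1 : contradiction with u ^ 2 ≠ 1
    have hvt : u ^ t = 1 := by linear_combination hv
    have e1 : u ^ (2 * N) = u := by
      rw [ht, pow_succ, hvt, one_mul]
    have e2 : u ^ (2 * N + 1) = u ^ 2 := by
      rw [ht, show t + 1 + 1 = t + 2 from rfl, pow_add, hvt, one_mul]
    rw [e1, e2] at heq
    have h2m : ((2:ℂ)) ^ m ≠ 0 := pow_ne_zero _ two_ne_zero
    have : (2:ℂ) ^ m * (u ^ 2 - 1) = 0 := by linear_combination heq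
    rcases mul_eq_zero.mp this with h' | h'
    · exact h2m h'
    · exact hu2 (by linear_combination h')
  · -- u ^ t = -1
    have hvt : u ^ t = -1 := by linear_combination hv
    have e1 : u ^ (2 * N) = -u := by
      rw [ht, pow_succ, hvt]; ring
    have e2 : u ^ (2 * N + 1) = -(u ^ 2) := by
      rw [ht, show t + 1 + 1 = t + 2 from rfl, pow_add, hvt]; ring
    rw [e1, e2] at heq
    obtain ⟨M, hMm⟩ : ∃ M, m = M + 1 := ⟨m - 1, by omega⟩
    subst hMm
    have hkey : 2 ^ M * (u ^ 2 + 1) + (2 ^ (M + 1) - 1) * u = 0 := by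
      linear_combination (-1/2 : ℂ) * heq
    rcases Nat.eq_zero_or_pos M with hM0 | hMpos
    · -- M = 0 : u² + u + 1 = 0, so u³ = 1, contradiction with u ^ t = -1
      subst hM0
      have hu3 : u ^ 3 = 1 := by linear_combination (u - 1) * hkey
      have hcontra : (-1 : ℂ) = 1 := by
        calc (-1 : ℂ) = (u ^ t) ^ 3 := by rw [hvt]; ring
        _ = (u ^ 3) ^ t := by rw [← pow_mul, ← pow_mul, Nat.mul_comm]
        _ = 1 := by rw [hu3, one_pow]
      norm_num at hcontra
    · -- M ≥ 1 : integer sequence parity contradiction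
      have hrel := seqA_rel M u hkey t
      rw [hvt, hu2t] at hrel
      have hcast : (seqA M t : ℂ) = ((-(((2:ℤ) ^ M) ^ t * 2) : ℤ) : ℂ) := by
        push_cast
        linear_combination -hrel
      have hZ : seqA M t = -(((2:ℤ) ^ M) ^ t * 2) := by exact_mod_cast hcast
      have hdvd : (2:ℤ) ∣ seqA M t := by rw [hZ]; exact ⟨-((2:ℤ)^M)^t, by ring⟩
      have := seqA_odd M hMpos (t - 1)
      rw [show t - 1 + 1 = t by omega] at this
      exact this hdvd


open Real in
private lemma core (m N₁ N₂ : ℕ) (hm : 1 ≤ m) (hN₂ : 1 ≤ N₂) (hlt : N₂ < N₁) (k : ℝ)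
    (hk0 : 0 < k) (hkπ : k < π)
    (h1 : -(1 / (2 ^ (m + 1) - 1)) * Real.tan (k / 2) = Real.tan (N₁ * k))
    (h2 : -(1 / (2 ^ (m + 1) - 1)) * Real.tan (k / 2) = Real.tan (N₂ * k)) : False := by
  have hπ := Real.pi_pos
  have hCpos : (0:ℝ) < 2 ^ (m + 1) - 1 := by
    have h2le : (2:ℝ) ^ 1 ≤ 2 ^ (m + 1) :=
      pow_le_pow_right₀ (by norm_num : (1:ℝ) ≤ 2) (by omega : 1 ≤ m + 1)
    rw [pow_one] at h2le
    linarith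
  have htanpos : 0 < Real.tan (k / 2) :=
    Real.tan_pos_of_pos_of_lt_pi_div_two (by linarith) (by linarith)
  have hcoshalf : 0 < Real.cos (k / 2) :=
    Real.cos_pos_of_mem_Ioo ⟨by linarith, by linarith⟩
  have hneg1 : Real.tan (N₁ * k) < 0 := by
    rw [← h1]
    have : 0 < (1 / (2 ^ (m + 1) - 1)) * Real.tan (k / 2) := by positivity
    linarith
  have hneg2 : Real.tan (N₂ * k) < 0 := by
    rw [← h2]
    have : 0 < (1 / (2 ^ (m + 1) - 1)) * Real.tan (k / 2) := by positivity
    linarith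
  have hcos1 : Real.cos (N₁ * k) ≠ 0 := by
    intro h
    rw [Real.tan_eq_sin_div_cos, h, div_zero] at hneg1
    exact lt_irrefl 0 hneg1
  have hcos2 : Real.cos (N₂ * k) ≠ 0 := by
    intro h
    rw [Real.tan_eq_sin_div_cos, h, div_zero] at hneg2
    exact lt_irrefl 0 hneg2
  -- k is a rational multiple of π
  have htaneq : Real.tan (N₁ * k) = Real.tan (N₂ * k) := by rw [← h1, h2]
  have hsubzero : Real.sin (N₁ * k) * Real.cos (N₂ * k)
      - Real.cos (N₁ * k) * Real.sin (N₂ * k) = 0 := by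
    rw [Real.tan_eq_sin_div_cos, Real.tan_eq_sin_div_cos] at htaneq
    rw [div_eq_div_iff hcos1 hcos2] at htaneq
    linear_combination htaneq
  have hsdiff : Real.sin ((N₁ : ℝ) * k - (N₂ : ℝ) * k) = 0 := by
    rw [Real.sin_sub]
    linear_combination hsubzero
  obtain ⟨j, hj⟩ := Real.sin_eq_zero_iff.mp hsdiff
  set n : ℕ := N₁ - N₂ with hndef
  have hn1 : 1 ≤ n := by omega
  have hnreal : ((n : ℝ)) = (N₁ : ℝ) - (N₂ : ℝ) := by
    rw [hndef]
    push_cast [Nat.cast_sub hlt.le]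
    ring
  have hjk : (j : ℝ) * π = (n : ℝ) * k := by rw [hj, hnreal]; ring
  have hjpos : 0 < j := by
    have hnk : 0 < (n : ℝ) * k := by
      have : (0:ℝ) < (n:ℝ) := by exact_mod_cast hn1
      positivity
    have : 0 < (j:ℝ) := by nlinarith [hjk]
    exact_mod_cast this
  set J : ℕ := j.toNat with hJdef
  have hJc : ((J : ℤ)) = j := Int.toNat_of_nonneg hjpos.le
  have hJk : (J : ℝ) * π = (n : ℝ) * k := by
    rw [← hjk]
    congr 1
    exact_mod_cast congrArg (Int.cast : ℤ → ℝ) hJc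
  -- complex setup
  set θ₂ : ℂ := ((k:ℂ)) / 2 with hθ₂def
  set θ₁ : ℂ := ((N₁:ℂ)) * ((k:ℂ)) with hθ₁def
  set z : ℂ := Complex.exp (θ₂ * Complex.I) with hzdef
  have hz : z ≠ 0 := Complex.exp_ne_zero _
  set u : ℂ := Complex.exp (((k : ℝ) : ℂ) * Complex.I) with hudef
  have huz : u = z ^ 2 := by
    rw [hudef, hzdef, ← Complex.exp_nat_mul]
    congr 1
    rw [hθ₂def]
    push_cast
    ring
  have hun : u ^ n = (-1 : ℂ) ^ J := by
    rw [hudef, ← Complex.exp_nat_mul]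
    rw [show ((n:ℂ) * (((k:ℝ):ℂ) * Complex.I)) = ((((n : ℝ) * k : ℝ)) : ℂ) * Complex.I by
      push_cast; ring]
    rw [← hJk]
    rw [show ((((J:ℝ) * π : ℝ)) : ℂ) * Complex.I = (J : ℂ) * ((π : ℂ) * Complex.I) by
      push_cast; ring]
    rw [Complex.exp_nat_mul, Complex.exp_pi_mul_I]
  have hu2n : u ^ (2 * n) = 1 := by
    rw [show 2 * n = n * 2 by ring, pow_mul, hun, ← pow_mul, show J * 2 = 2 * J by ring, pow_mul]
    norm_num
  have him : u.im ≠ 0 := by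
    have himeq : u.im = Real.sin k := by
      rw [hudef, Complex.exp_mul_I, ← Complex.ofReal_cos, ← Complex.ofReal_sin]
      simp [Complex.sin_ofReal_re]
    rw [himeq]
    exact (Real.sin_pos_of_pos_of_lt_pi hk0 hkπ).ne'
  -- the real identity
  have hre : ((2:ℝ) ^ (m+1) - 1) * Real.sin (N₁ * k) * Real.cos (k / 2)
      + Real.cos (N₁ * k) * Real.sin (k / 2) = 0 := by
    rw [Real.tan_eq_sin_div_cos, Real.tan_eq_sin_div_cos] at h1
    have key : Real.sin (N₁ * k) = -(1 / (2 ^ (m + 1) - 1)) * (Real.sin (k / 2) / Real.cos (k / 2))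
        * Real.cos (N₁ * k) := by rw [h1, div_mul_cancel₀ _ hcos1]
    have e1 : ((2:ℝ) ^ (m+1) - 1) * (1 / (2 ^ (m + 1) - 1)) = 1 := mul_one_div_cancel hCpos.ne'
    have e2 : Real.sin (k / 2) / Real.cos (k / 2) * Real.cos (k / 2) = Real.sin (k / 2) :=
      div_mul_cancel₀ _ hcoshalf.ne'
    linear_combination (((2:ℝ) ^ (m+1) - 1) * Real.cos (k / 2)) * key
      + (-(Real.sin (k / 2) / Real.cos (k / 2) * Real.cos (k / 2)) * Real.cos (N₁ * k)) * e1
      - Real.cos (N₁ * k) * e2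
  -- cast to ℂ
  have hreC : ((2:ℂ) ^ (m+1) - 1) * Complex.sin θ₁ * Complex.cos θ₂
      + Complex.cos θ₁ * Complex.sin θ₂ = 0 := by
    have hcast := congrArg (Complex.ofReal) hre
    push_cast at hcast
    rw [hθ₁def, hθ₂def]
    linear_combination hcast
  -- sin / cos in terms of exponentials
  have hsinexp : ∀ θ : ℂ, Complex.sin θ * (2 * Complex.I)
      = Complex.exp (θ * Complex.I) - Complex.exp (-(θ * Complex.I)) := by
    intro θ
    rw [Complex.exp_mul_I, show -(θ * Complex.I) = -θ * Complex.I by ring, Complex.exp_mul_I,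
      Complex.cos_neg, Complex.sin_neg]
    ring
  have hcosexp : ∀ θ : ℂ, Complex.cos θ * 2
      = Complex.exp (θ * Complex.I) + Complex.exp (-(θ * Complex.I)) := by
    intro θ
    rw [Complex.exp_mul_I, show -(θ * Complex.I) = -θ * Complex.I by ring, Complex.exp_mul_I,
      Complex.cos_neg, Complex.sin_neg]
    ring
  set A : ℂ := Complex.exp (θ₁ * Complex.I) with hAdef
  set A' : ℂ := Complex.exp (-(θ₁ * Complex.I)) with hA'def
  set B' : ℂ := Complex.exp (-(θ₂ * Complex.I)) with hB'def
  have hzB : z = Complex.exp (θ₂ * Complex.I) := rfl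
  have hQ1 : ((2:ℂ)^(m+1) - 1) * (A - A') * (z + B') + (A + A') * (z - B') = 0 := by
    have eA : A - A' = Complex.sin θ₁ * (2*Complex.I) := (hsinexp θ₁).symm
    have eB : z + B' = Complex.cos θ₂ * 2 := by rw [hzB]; exact (hcosexp θ₂).symm
    have eC : A + A' = Complex.cos θ₁ * 2 := (hcosexp θ₁).symm
    have eD : z - B' = Complex.sin θ₂ * (2*Complex.I) := by rw [hzB]; exact (hsinexp θ₂).symm
    rw [eA, eB, eC, eD]
    linear_combination (4 * Complex.I) * hreC
  have hA : A = z ^ (2 * N₁) := by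
    rw [hAdef, hzdef, ← Complex.exp_nat_mul]
    congr 1
    rw [hθ₁def, hθ₂def]
    push_cast
    ring
  have hA'Z : z ^ (2 * N₁) * A' = 1 := by
    rw [← hA, hAdef, hA'def, ← Complex.exp_add]
    simp
  have hB'z : z * B' = 1 := by
    rw [hzB, hB'def, ← Complex.exp_add]
    simp
  rw [hA] at hQ1
  have hQ : ((2:ℂ)^(m+1) - 1) * ((z^(2*N₁))^2 - 1) * (z^2 + 1)
      + ((z^(2*N₁))^2 + 1) * (z^2 - 1) = 0 := by
    linear_combination (z^(2*N₁) * z) * hQ1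
      + (((2:ℂ)^(m+1) - 1) * (z^2 + z*B') + (z*B' - z^2)) * hA'Z
      + (((2:ℂ)^(m+1) - 1) * (1 - (z^(2*N₁))^2) + (z^(2*N₁))^2 + 1) * hB'z
  have heq : (2:ℂ)^m * (u^(2*N₁+1) - 1) + ((2:ℂ)^m - 1) * (u^(2*N₁) - u) = 0 := by
    rw [huz]
    linear_combination (1/2 : ℂ) * hQ
  exact key m N₁ n hm (by omega) hn1 u hu2n him heq



open Real in
/-- For a fixed `m` and distinct `N₁ ≠ N₂`, the solution sets in `(0,π)` of
`-(1/(2^(m+1)-1)) tan(k/2) = tan(N₁ k)` and `-(1/(2^(m+1)-1)) tan(k/2) = tan(N₂ k)`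
are disjoint. -/
theorem solSet_fixed_m_disjoint (m N₁ N₂ : ℕ) (hm : 1 ≤ m)
    (hN₁ : 1 ≤ N₁) (hN₂ : 1 ≤ N₂) (hne : N₁ ≠ N₂) :
    {k : ℝ | k ∈ Set.Ioo 0 π ∧
        -(1 / (2 ^ (m + 1) - 1)) * Real.tan (k / 2) = Real.tan (N₁ * k)}
      ∩ {k : ℝ | k ∈ Set.Ioo 0 π ∧
        -(1 / (2 ^ (m + 1) - 1)) * Real.tan (k / 2) = Real.tan (N₂ * k)} = ∅ := by
  rw [Set.eq_empty_iff_forall_notMem]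
  rintro k ⟨⟨⟨hk0, hkπ⟩, h1⟩, ⟨-, h2⟩⟩
  rcases hne.lt_or_gt with h | h
  · exact core m N₂ N₁ hm hN₁ h k hk0 hkπ h2 h1
  · exact core m N₁ N₂ hm hN₂ h k hk0 hkπ h1 h2
end

section
/- Let T ≥ 1 be an integer and k_1 < ... < k_T be the T solutions in (0,π) of -(α/(α+2)) tan(k/2) = tan(Tk) for a fixed α ∈ (0,1] (equivalently the equation (1+V_2)/(V_2-1)·tan(k/2) = tan(Tk) for V_2 ∈ (-1,1)). Then each solution satisfies (t - 1/2)π/T ≤ k_t ≤ tπ/T for t = 1,...,T. -/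
open Real

/-- `cos y ≠ 0` if `y` lies in `((n+1/2)π, (n+1)π]`. -/
lemma cos_ne_zero_of_mem_Ioc (n : ℕ) {y : ℝ}
    (h1 : ((n : ℝ) + 1/2) * π < y) (h2 : y ≤ ((n : ℝ) + 1) * π) :
    Real.cos y ≠ 0 := by
  intro h
  obtain ⟨m, hm⟩ := Real.cos_eq_zero_iff.mp h
  rw [hm] at h1 h2
  have hπ := Real.pi_pos
  have hA : (2 * (n : ℝ) + 1) < 2 * (m : ℝ) + 1 := by nlinarith
  have hB : 2 * (m : ℝ) + 1 ≤ 2 * (n : ℝ) + 2 := by nlinarith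
  have hA' : 2 * (n : ℤ) + 1 < 2 * (m : ℤ) + 1 := by exact_mod_cast hA
  have hB' : 2 * (m : ℤ) + 1 ≤ 2 * (n : ℤ) + 2 := by exact_mod_cast hB
  omega


lemma contAt_tan_mul (r x : ℝ) (h : Real.cos (r * x) ≠ 0) :
    ContinuousAt (fun y : ℝ => Real.tan (r * y)) x :=
  ContinuousAt.comp (g := Real.tan) (f := fun y : ℝ => r * y)
    (Real.continuousAt_tan.2 h) (by fun_prop)

lemma contAt_tan_half (x : ℝ) (h : Real.cos (x / 2) ≠ 0) :
    ContinuousAt (fun y : ℝ => Real.tan (y / 2)) x :=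
  ContinuousAt.comp (g := Real.tan) (f := fun y : ℝ => y / 2)
    (Real.continuousAt_tan.2 h) (by fun_prop)

set_option maxHeartbeats 1000000 in
/-- Localization of the `T` solutions in `(0,π)` of
`-(α/(α+2)) tan(k/2) = tan(Tk)`: the `t`-th solution (1-indexed) lies in
`[(t - 1/2)π/T, tπ/T]`. -/
theorem solution_localization (T : ℕ) (hT : 1 ≤ T) (α : ℝ)
    (hα : α ∈ Set.Ioc (0 : ℝ) 1) (k : Fin T → ℝ)
    (hmono : StrictMono k)
    (hsol : ∀ t, k t ∈ Set.Ioo 0 π ∧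
      -(α / (α + 2)) * Real.tan (k t / 2) = Real.tan (T * k t))
    (hall : ∀ x ∈ Set.Ioo 0 π,
      -(α / (α + 2)) * Real.tan (x / 2) = Real.tan (T * x) → ∃ t, x = k t) :
    ∀ t : Fin T,
      ((t : ℕ) + 1 - 1 / 2) * π / T ≤ k t ∧ k t ≤ ((t : ℕ) + 1) * π / T := by
  obtain ⟨hα0, hα1⟩ := hα
  have hπ := Real.pi_pos
  have hT0 : (0 : ℝ) < T := by exact_mod_cast hT
  set c : ℝ := α / (α + 2) with hc_def
  have hc : 0 < c := div_pos hα0 (by linarith)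
  set g : ℝ → ℝ := fun x => Real.tan (T * x) + c * Real.tan (x / 2) with hg_def
  -- continuity of `g` away from the poles of `tan (T x)`, inside `(0, π)`
  have hcont : ∀ x : ℝ, x ∈ Set.Ioo 0 π → Real.cos (T * x) ≠ 0 → ContinuousAt g x := by
    intro x hx h1
    have h2 : Real.cos (x / 2) ≠ 0 :=
      ne_of_gt (Real.cos_pos_of_mem_Ioo ⟨by linarith [hx.1], by linarith [hx.2]⟩)
    have c1 : ContinuousAt (fun y : ℝ => Real.tan ((T : ℝ) * y)) x :=
      contAt_tan_mul _ _ h1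
    have c2 : ContinuousAt (fun y : ℝ => Real.tan (y / 2)) x :=
      contAt_tan_half _ h2
    exact c1.add (continuousAt_const.mul c2)
  -- existence of a root of `g` in each interval `((n+1/2)π/T, (n+1)π/T]`, inside `(0,π)`
  have key : ∀ i : Fin T, ∃ z : ℝ,
      ((i : ℕ) + 1/2 : ℝ) * π / T < z ∧ z ≤ ((i : ℕ) + 1 : ℝ) * π / T ∧
      z ∈ Set.Ioo 0 π ∧ g z = 0 := by
    intro i
    set n := (i : ℕ) with hn_def
    have hnT : n + 1 ≤ T := i.isLt
    have hnT' : ((n : ℝ) + 1) ≤ T := by exact_mod_cast hnT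
    set a : ℝ := ((n : ℝ) + 1/2) * π / T with ha_def
    set b : ℝ := ((n : ℝ) + 1) * π / T with hb_def
    have hab : a < b := by
      apply div_lt_div_of_pos_right ?_ hT0
      nlinarith
    have ha_pos : 0 < a := by positivity
    have hbπ : b ≤ π := by
      rw [div_le_iff₀ hT0]
      nlinarith
    have haπ : a < π := lt_of_lt_of_le hab hbπ
    have hcosa : ∀ z, a < z → z ≤ b → Real.cos ((T : ℝ) * z) ≠ 0 := by
      intro z hz1 hz2
      apply cos_ne_zero_of_mem_Ioc n
      · have := (div_lt_iff₀ hT0).mp hz1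
        linarith [this]
      · have := (le_div_iff₀ hT0).mp hz2
        linarith [this]
    -- `g` tends to `-∞` as `x → a⁺`
    have hTa : (T : ℝ) * a - ((n : ℝ) + 1) * π = -(π / 2) := by
      rw [ha_def]
      field_simp
      ring
    have t1 : Filter.Tendsto (fun x : ℝ => (T : ℝ) * x - ((n : ℝ) + 1) * π)
        (nhdsWithin a (Set.Ioi a)) (nhdsWithin (-(π / 2)) (Set.Ioi (-(π / 2)))) := by
      apply tendsto_nhdsWithin_of_tendsto_nhds_of_eventually_within
      · have hco : Continuous fun x : ℝ => (T : ℝ) * x - ((n : ℝ) + 1) * π := by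
          continuity
        have h := hco.continuousAt (x := a)
        rw [ContinuousAt] at h
        rw [show (T : ℝ) * a - ((n : ℝ) + 1) * π = -(π / 2) from hTa] at h
        exact h.mono_left nhdsWithin_le_nhds
      · filter_upwards [self_mem_nhdsWithin] with x hx
        simp only [Set.mem_Ioi] at hx ⊢
        have := mul_lt_mul_of_pos_left hx hT0
        linarith [hTa]
    have t2 : Filter.Tendsto (fun x : ℝ => Real.tan ((T : ℝ) * x))
        (nhdsWithin a (Set.Ioi a)) Filter.atBot := by
      have hcomp := Real.tendsto_tan_neg_pi_div_two.comp t1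
      apply hcomp.congr
      intro x
      simp only [Function.comp]
      have hcast : (T : ℝ) * x - ((n : ℝ) + 1) * π
          = (T : ℝ) * x - ((n + 1 : ℕ) : ℝ) * π := by push_cast; ring
      rw [hcast, Real.tan_periodic.sub_nat_mul_eq]
    have t3 : Filter.Tendsto (fun x : ℝ => c * Real.tan (x / 2))
        (nhdsWithin a (Set.Ioi a)) (nhds (c * Real.tan (a / 2))) := by
      have h2 : Real.cos (a / 2) ≠ 0 :=
        ne_of_gt (Real.cos_pos_of_mem_Ioo ⟨by linarith, by linarith⟩)
      have c2 : ContinuousAt (fun y : ℝ => Real.tan (y / 2)) a :=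
        contAt_tan_half _ h2
      exact (continuousAt_const.mul c2).tendsto.mono_left nhdsWithin_le_nhds
    have tg : Filter.Tendsto g (nhdsWithin a (Set.Ioi a)) Filter.atBot := t2.atBot_add t3
    by_cases hcase : n + 1 < T
    · -- interior interval : `b < π`
      have hbπ' : b < π := by
        rw [div_lt_iff₀ hT0]
        have hx : ((n : ℝ) + 1) < T := by exact_mod_cast hcase
        nlinarith
      have hgb : 0 < g b := by
        have h1 : Real.tan ((T : ℝ) * b) = 0 := by
          have hcast : (T : ℝ) * b = ((n + 1 : ℕ) : ℝ) * π := by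
            rw [hb_def]; push_cast; field_simp
          rw [hcast, Real.tan_nat_mul_pi]
        have h2 : 0 < Real.tan (b / 2) :=
          Real.tan_pos_of_pos_of_lt_pi_div_two (by positivity) (by linarith)
        have : g b = Real.tan ((T : ℝ) * b) + c * Real.tan (b / 2) := rfl
        rw [this, h1]
        have := mul_pos hc h2
        linarith
      obtain ⟨x0, hx0mem, hx0neg⟩ : ∃ x0, x0 ∈ Set.Ioc a b ∧ g x0 < 0 := by
        have hev := tg.eventually (Filter.eventually_lt_atBot (0 : ℝ))
        have hmem : Set.Ioc a b ∈ nhdsWithin a (Set.Ioi a) :=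
          Ioc_mem_nhdsGT_of_mem ⟨le_refl a, hab⟩
        exact ((Filter.eventually_of_mem hmem fun x hx => hx).and hev).exists
      have hcontOn : ContinuousOn g (Set.Icc x0 b) := by
        intro z hz
        have hz1 : a < z := lt_of_lt_of_le hx0mem.1 hz.1
        exact (hcont z ⟨lt_trans ha_pos hz1, lt_of_le_of_lt hz.2 hbπ'⟩
          (hcosa z hz1 hz.2)).continuousWithinAt
      have hivt := intermediate_value_Icc hx0mem.2 hcontOn
      obtain ⟨z, hz, hgz⟩ := hivt ⟨le_of_lt hx0neg, le_of_lt hgb⟩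
      exact ⟨z, lt_of_lt_of_le hx0mem.1 hz.1, hz.2,
        ⟨lt_trans ha_pos (lt_of_lt_of_le hx0mem.1 hz.1), lt_of_le_of_lt hz.2 hbπ'⟩, hgz⟩
    · -- last interval : `b = π`
      have hnT2 : n + 1 = T := by omega
      have hbπ' : b = π := by
        have hx : ((n : ℝ) + 1) = T := by exact_mod_cast hnT2
        rw [hb_def, hx]
        field_simp
      have s1 : Filter.Tendsto (fun x : ℝ => x / 2)
          (nhdsWithin π (Set.Iio π)) (nhdsWithin (π / 2) (Set.Iio (π / 2))) := by
        apply tendsto_nhdsWithin_of_tendsto_nhds_of_eventually_within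
        · exact ((continuous_id.div_const 2).continuousAt (x := π)).mono_left
            nhdsWithin_le_nhds
        · filter_upwards [self_mem_nhdsWithin] with x hx
          simp only [Set.mem_Iio] at hx ⊢
          linarith
      have s2 : Filter.Tendsto (fun x : ℝ => c * Real.tan (x / 2))
          (nhdsWithin π (Set.Iio π)) Filter.atTop := by
        have := Real.tendsto_tan_pi_div_two.comp s1
        exact Filter.Tendsto.const_mul_atTop hc (this.congr fun x => rfl)
      have hcosTπ : Real.cos ((T : ℝ) * π) ≠ 0 := by
        intro h
        obtain ⟨m, hm⟩ := Real.cos_eq_zero_iff.mp h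
        have h2 : (2 * (T : ℝ)) * π = (2 * (m : ℝ) + 1) * π := by linarith [hm]
        have h3 : 2 * (T : ℝ) = 2 * (m : ℝ) + 1 :=
          mul_right_cancel₀ (ne_of_gt hπ) h2
        have h4 : 2 * (T : ℤ) = 2 * (m : ℤ) + 1 := by exact_mod_cast h3
        omega
      have s3 : Filter.Tendsto (fun x : ℝ => Real.tan ((T : ℝ) * x))
          (nhdsWithin π (Set.Iio π)) (nhds (Real.tan ((T : ℝ) * π))) := by
        have c1 : ContinuousAt (fun y : ℝ => Real.tan ((T : ℝ) * y)) π :=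
          contAt_tan_mul _ _ hcosTπ
        exact c1.tendsto.mono_left nhdsWithin_le_nhds
      have sg : Filter.Tendsto g (nhdsWithin π (Set.Iio π)) Filter.atTop := s3.add_atTop s2
      obtain ⟨x1, hx1mem, hx1pos⟩ : ∃ x1, x1 ∈ Set.Ioo a π ∧ 0 < g x1 := by
        have hev := sg.eventually (Filter.eventually_gt_atTop (0 : ℝ))
        have hmem : Set.Ioo a π ∈ nhdsWithin π (Set.Iio π) :=
          Ioo_mem_nhdsLT_of_mem ⟨haπ, le_refl π⟩
        exact ((Filter.eventually_of_mem hmem fun x hx => hx).and hev).exists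
      obtain ⟨x0, hx0mem, hx0neg⟩ : ∃ x0, x0 ∈ Set.Ioo a x1 ∧ g x0 < 0 := by
        have hev := tg.eventually (Filter.eventually_lt_atBot (0 : ℝ))
        have hmem : Set.Ioo a x1 ∈ nhdsWithin a (Set.Ioi a) :=
          Ioo_mem_nhdsGT_of_mem ⟨le_refl a, hx1mem.1⟩
        exact ((Filter.eventually_of_mem hmem fun x hx => hx).and hev).exists
      have hcontOn : ContinuousOn g (Set.Icc x0 x1) := by
        intro z hz
        have hz1 : a < z := lt_of_lt_of_le hx0mem.1 hz.1
        have hz2 : z < π := lt_of_le_of_lt hz.2 hx1mem.2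
        exact (hcont z ⟨lt_trans ha_pos hz1, hz2⟩
          (hcosa z hz1 (by rw [hbπ']; exact le_of_lt hz2))).continuousWithinAt
      have hivt := intermediate_value_Icc (le_of_lt hx0mem.2) hcontOn
      obtain ⟨z, hz, hgz⟩ := hivt ⟨le_of_lt hx0neg, le_of_lt hx1pos⟩
      have hzπ : z < π := lt_of_le_of_lt hz.2 hx1mem.2
      exact ⟨z, lt_of_lt_of_le hx0mem.1 hz.1, hbπ' ▸ le_of_lt hzπ,
        ⟨lt_trans ha_pos (lt_of_lt_of_le hx0mem.1 hz.1), hzπ⟩, hgz⟩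
  -- pick the roots, match them with the enumeration `k`
  choose y hy1 hy2 hy3 hy4 using key
  have hyk : ∀ i, ∃ t, y i = k t := by
    intro i
    apply hall (y i) (hy3 i)
    have h := hy4 i
    have h' : Real.tan ((T : ℝ) * y i) + c * Real.tan (y i / 2) = 0 := h
    rw [hc_def] at h'
    linarith
  choose σ hσ using hyk
  have hymono : StrictMono y := by
    intro i j hij
    have hij' : (i : ℕ) < (j : ℕ) := hij
    have hijR : ((i : ℕ) : ℝ) + 1 ≤ ((j : ℕ) : ℝ) := by exact_mod_cast hij'
    calc y i ≤ ((i : ℕ) + 1 : ℝ) * π / T := hy2 i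
      _ ≤ ((j : ℕ) + 1/2 : ℝ) * π / T := by
          apply (div_le_div_iff_of_pos_right hT0).mpr
          nlinarith
      _ < y j := hy1 j
  have hσmono : StrictMono σ := by
    intro i j hij
    have hk : k (σ i) < k (σ j) := by
      rw [← hσ i, ← hσ j]
      exact hymono hij
    exact hmono.lt_iff_lt.mp hk
  have hσid : σ = id := by
    have hbij : Function.Bijective σ := Finite.injective_iff_bijective.mp hσmono.injective
    have inst : WellFoundedLT (Fin T) := inferInstance
    refine (@StrictMono.range_inj (Fin T) (Fin T) _ _ inst σ id hσmono strictMono_id).mp ?_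
    rw [hbij.surjective.range_eq, Set.range_id]
  have hky : ∀ i, k i = y i := by
    intro i
    have h := hσ i
    rw [hσid] at h
    exact h.symm
  intro t
  rw [hky t]
  constructor
  · calc ((t : ℕ) + 1 - 1/2 : ℝ) * π / T = ((t : ℕ) + 1/2 : ℝ) * π / T := by ring
      _ ≤ y t := le_of_lt (hy1 t)
  · exact hy2 t
end

section
/- Define C_k(T) = T - sin(Tk)/sin(k) for k ∈ (0,π). There exists T_0 ∈ ℕ such that for all integers T > T_0 and all k ∈ (3π/(2T), π - π/T), one has C_k(T)/C_k(2T) ≤ 5/6. -/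
open Real

/-- With `C_k(T) = T - sin(Tk)/sin k`, there is `T₀` such that for all `T > T₀`
and all `k ∈ (3π/(2T), π - π/T)`, one has `C_k(T)/C_k(2T) ≤ 5/6`. -/
theorem C_ratio_le :
    ∃ T₀ : ℕ, ∀ T : ℕ, T₀ < T →
      ∀ k : ℝ, 3 * π / (2 * T) < k → k < π - π / T →
        ((T : ℝ) - Real.sin (T * k) / Real.sin k)
            / ((2 * T : ℝ) - Real.sin (2 * T * k) / Real.sin k) ≤ 5 / 6 := by
  refine ⟨10, fun T hT k hk1 hk2 => ?_⟩
  have hT1 : (11:ℝ) ≤ T := by exact_mod_cast hT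
  have hTpos : (0:ℝ) < T := by linarith
  have hpi3 : (3.141592 : ℝ) < π := Real.pi_gt_d6
  have hpi4 : π < 3.15 := Real.pi_lt_d2
  set x : ℝ := π / T with hxdef
  have hx : (0:ℝ) < x := by positivity
  have hxT : x * T = π := div_mul_cancel₀ π hTpos.ne'
  have hxsmall : x ≤ 0.29 := by nlinarith
  have hxk : x < k := by
    have h32 : 3 * π / (2 * T) = (3/2) * x := by rw [hxdef]; ring
    nlinarith
  have hkpos : 0 < k := hx.trans hxk
  have hklt : k < π := by nlinarith
  have hsk : 0 < Real.sin k := Real.sin_pos_of_pos_of_lt_pi hkpos hklt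
  have hxle : x ≤ π / 2 := by nlinarith
  -- sin k ≥ sin x
  have hmin : Real.sin x ≤ Real.sin k := by
    rcases le_or_gt k (π/2) with h | h
    · exact Real.sin_le_sin_of_le_of_le_pi_div_two (by linarith) h hxk.le
    · have h1 : Real.sin k = Real.sin (π - k) := (Real.sin_pi_sub k).symm
      rw [h1]
      exact Real.sin_le_sin_of_le_of_le_pi_div_two (by linarith) (by linarith)
        (by nlinarith)
  have hcube := Real.sin_gt_sub_cube hx
  -- key bound : 3 ≤ T * sin k
  have key : (3:ℝ) ≤ T * Real.sin k := by
    nlinarith [mul_lt_mul_of_pos_left hcube hTpos,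
      mul_le_mul_of_nonneg_left hmin hTpos.le, sq_nonneg x, mul_pos hx hx]
  have hone : (1:ℝ) ≤ T / 3 * Real.sin k := by
    rw [div_mul_eq_mul_div, le_div_iff₀ (by norm_num : (0:ℝ) < 3)]
    linarith
  have hb1 : Real.sin (T * k) / Real.sin k ≥ -(T/3) := by
    rw [ge_iff_le, neg_le, ← neg_div, div_le_iff₀ hsk]
    linarith [Real.neg_one_le_sin (T * k)]
  have hb2 : Real.sin (2 * T * k) / Real.sin k ≤ T/3 := by
    rw [div_le_iff₀ hsk]
    linarith [Real.sin_le_one (2 * T * k)]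
  have hden : (0:ℝ) < (2 * T : ℝ) - Real.sin (2 * T * k) / Real.sin k := by
    linarith
  rw [div_le_iff₀ hden]
  linarith
end
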